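/- arXiv:2310.03207 — 9 statements merged into one kernel-verified Lean document; each statement's English description precedes it below -/
import Mathlib

section
/- For a simple graph G, the following are equivalent: (i) there is no injective graph homomorphism from G into a disjoint union of copies of the path P_3 (i.e., G is not isomorphic to a subgraph of a disjoint union of paths of length three); (ii) G contains a subgraph isomorphic to one of the following four graphs: the triangle C_3, the 4-cycle C_4, the path P_4 with four edges, or the claw Y. -/
open SimpleGraph

/-- The disjoint union of `ι`-many copies of the path `P₃` (the path with 4 vertices
and 3 edges, given in Mathlib as `pathGraph 4`). -/
def unionP3 (ι : Type*) : SimpleGraph (ι × Fin 4) where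
  Adj p q := p.1 = q.1 ∧ (pathGraph 4).Adj p.2 q.2
  symm := by
    constructor
    rintro p q ⟨h1, h2⟩
    exact ⟨h1.symm, h2.symm⟩
  loopless := by
    constructor
    rintro p ⟨h1, h2⟩
    exact (pathGraph 4).irrefl h2

/-- The triangle `C₃`: the complete graph on three vertices. -/
def triangleC3 : SimpleGraph (Fin 3) := ⊤

/-- The 4-cycle `C₄` with vertices `0,1,2,3` and edges `0–1, 1–2, 2–3, 3–0`. -/
def cycleC4 : SimpleGraph (Fin 4) := SimpleGraph.fromRel (fun i j => j = i + 1)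

/-- The claw `Y`: vertices `0,1,2,3` with edges `0–1, 1–2, 1–3`. -/
def clawY : SimpleGraph (Fin 4) := SimpleGraph.fromRel (fun i _ => i = 1)

/-!
A copy of a connected graph in a disjoint union of paths `P₃` lies in a single path, and none of
`C₃`, `C₄`, `P₄`, `Y` fits into `P₃`. Conversely, suppose `G` contains none of them. Every
component of `G` has a vertex `r` of degree at most one: the far end `e` of a path
`b – v – a – e` is one, since a second neighbour of `e` would close a triangle or a `C₄`, or
extend the path to a `P₄`. Every vertex of the component then ends a path from `r` of length at
most 3; that length is unique, and without claws a path of given length from `r` has a unique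
end, so labelling each vertex by this length embeds the component into `P₃`.
-/

open Function

namespace SimpleGraph

variable {V : Type*} {G : SimpleGraph V}

theorem isContained_iff_exists_injective_hom {α β : Type*} {A : SimpleGraph α}
    {B : SimpleGraph β} : A ⊑ B ↔ ∃ f : A →g B, Injective f :=
  ⟨fun ⟨f⟩ ↦ ⟨f.toHom, f.injective⟩, fun ⟨f, hf⟩ ↦ ⟨f.toCopy hf⟩⟩

theorem triangleC3_isContained {a b c : V} (hab : G.Adj a b) (hbc : G.Adj b c) (hac : G.Adj a c) :
    triangleC3 ⊑ G := by
  refine ⟨⟨⟨![a, b, c], fun {i j} h ↦ ?_⟩, fun i j h ↦ ?_⟩⟩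
  · fin_cases i <;> fin_cases j <;> simp_all [triangleC3, adj_comm]
  · have := hab.ne; have := hbc.ne; have := hac.ne
    fin_cases i <;> fin_cases j <;> simp_all

theorem cycleC4_isContained {a b c d : V} (hab : G.Adj a b) (hbc : G.Adj b c) (hcd : G.Adj c d)
    (hda : G.Adj d a) (hac : a ≠ c) (hbd : b ≠ d) : cycleC4 ⊑ G := by
  refine ⟨⟨⟨![a, b, c, d], fun {i j} h ↦ ?_⟩, fun i j h ↦ ?_⟩⟩
  · fin_cases i <;> fin_cases j <;> simp_all [cycleC4, adj_comm]
  · have := hab.ne; have := hbc.ne; have := hcd.ne; have := hda.ne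
    fin_cases i <;> fin_cases j <;> simp_all [eq_comm]

theorem pathGraph_five_isContained {a b c d e : V} (hab : G.Adj a b) (hbc : G.Adj b c)
    (hcd : G.Adj c d) (hde : G.Adj d e) (hac : a ≠ c) (had : a ≠ d) (hae : a ≠ e) (hbd : b ≠ d)
    (hbe : b ≠ e) (hce : c ≠ e) : pathGraph 5 ⊑ G := by
  refine ⟨⟨⟨![a, b, c, d, e], fun {i j} h ↦ ?_⟩, fun i j h ↦ ?_⟩⟩
  · rw [pathGraph_adj] at h
    fin_cases i <;> fin_cases j <;> simp_all [adj_comm]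
  · have := hab.ne; have := hbc.ne; have := hcd.ne; have := hde.ne
    fin_cases i <;> fin_cases j <;> simp_all [eq_comm]

theorem clawY_isContained {v a b c : V} (hva : G.Adj v a) (hvb : G.Adj v b) (hvc : G.Adj v c)
    (hab : a ≠ b) (hac : a ≠ c) (hbc : b ≠ c) : clawY ⊑ G := by
  refine ⟨⟨⟨![a, v, b, c], fun {i j} h ↦ ?_⟩, fun i j h ↦ ?_⟩⟩
  · fin_cases i <;> fin_cases j <;> simp_all [clawY, adj_comm]
  · have := hva.ne; have := hvb.ne; have := hvc.ne
    fin_cases i <;> fin_cases j <;> simp_all [eq_comm]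

theorem eq_of_adj_of_clawY_free (hY : clawY.Free G) {v a b c : V} (hva : G.Adj v a)
    (hvb : G.Adj v b) (hvc : G.Adj v c) (hab : a ≠ b) (hac : a ≠ c) : b = c :=
  by_contra fun hbc ↦ hY (clawY_isContained hva hvb hvc hab hac hbc)

/-- `G.layer r k v`: `v` is the last vertex of a path of length `k` in `G` starting at `r`. -/
def layer (G : SimpleGraph V) (r : V) : Fin 4 → V → Prop :=
  ![(· = r), G.Adj r, fun v ↦ ∃ m, G.Adj r m ∧ G.Adj m v ∧ v ≠ r,
    fun v ↦ ∃ m n, G.Adj r m ∧ G.Adj m n ∧ G.Adj n v ∧ n ≠ r ∧ v ≠ m ∧ v ≠ r]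

variable {r : V}

theorem layer_functional (hr : (G.neighborSet r).Subsingleton) (hY : clawY.Free G)
    {k l : Fin 4} {v : V} (hk : G.layer r k v) (hl : G.layer r l v) : k = l := by
  by_contra hne
  wlog hkl : k < l generalizing k l
  · exact this hl hk (Ne.symm hne) (by omega)
  fin_cases k <;> fin_cases l <;> first | exact absurd hkl (by decide) | skip
  · exact G.irrefl (hk ▸ hl)
  · obtain ⟨-, -, -, hvr⟩ := hl
    exact hvr hk
  · obtain ⟨-, -, -, -, -, -, -, hvr⟩ := hl
    exact hvr hk
  · obtain ⟨m, hrm, hmv, -⟩ := hl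
    exact G.irrefl (hr hrm hk ▸ hmv)
  · obtain ⟨m, _, hrm, -, -, -, hvm, -⟩ := hl
    exact hvm (hr hk hrm)
  · obtain ⟨m, hrm, hmv, hvr⟩ := hk
    obtain ⟨m', n, hrm', hm'n, hnv, hnr, -, -⟩ := hl
    obtain rfl : m' = m := hr hrm' hrm
    exact hnv.ne (eq_of_adj_of_clawY_free hY hrm.symm hm'n hmv hnr.symm hvr.symm)

theorem layer_unique (hr : (G.neighborSet r).Subsingleton) (hY : clawY.Free G)
    {k : Fin 4} {v w : V} (hv : G.layer r k v) (hw : G.layer r k w) : v = w := by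
  fin_cases k
  · exact hv.trans hw.symm
  · exact hr hv hw
  · obtain ⟨m, hrm, hmv, hvr⟩ := hv
    obtain ⟨m', hrm', hm'w, hwr⟩ := hw
    obtain rfl : m' = m := hr hrm' hrm
    exact eq_of_adj_of_clawY_free hY hrm.symm hmv hm'w hvr.symm hwr.symm
  · obtain ⟨m, n, hrm, hmn, hnv, hnr, hvm, -⟩ := hv
    obtain ⟨m', n', hrm', hm'n', hn'w, hn'r, hwm', -⟩ := hw
    obtain rfl : m' = m := hr hrm' hrm
    obtain rfl : n' = n := eq_of_adj_of_clawY_free hY hrm.symm hm'n' hmn hn'r.symm hnr.symm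
    exact eq_of_adj_of_clawY_free hY hmn.symm hnv hn'w hvm.symm hwm'.symm

theorem layer_step (hr : (G.neighborSet r).Subsingleton) (hT : triangleC3.Free G)
    (hC : cycleC4.Free G) (hP : (pathGraph 5).Free G) {k : Fin 4} {v w : V}
    (hv : G.layer r k v) (hvw : G.Adj v w) : ∃ l, (pathGraph 4).Adj k l ∧ G.layer r l w := by
  fin_cases k
  · exact ⟨1, by simp [pathGraph_adj], hv ▸ hvw⟩
  · by_cases hwr : w = r
    · exact ⟨0, by simp [pathGraph_adj], hwr⟩
    · exact ⟨2, by simp [pathGraph_adj], v, hv, hvw, hwr⟩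
  · obtain ⟨m, hrm, hmv, hvr⟩ := hv
    by_cases hwm : w = m
    · exact ⟨1, by simp [pathGraph_adj], hwm ▸ hrm⟩
    by_cases hwr : w = r
    · subst hwr
      exact (G.irrefl (hr hrm hvw.symm ▸ hmv)).elim
    · exact ⟨3, by simp [pathGraph_adj], m, v, hrm, hmv, hvw, hvr, hwm, hwr⟩
  · obtain ⟨m, n, hrm, hmn, hnv, hnr, hvm, hvr⟩ := hv
    by_cases hwn : w = n
    · exact ⟨2, by simp [pathGraph_adj], m, hrm, hwn ▸ hmn, hwn ▸ hnr⟩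
    by_cases hwr : w = r
    · subst hwr
      exact (hC (cycleC4_isContained hrm hmn hnv hvw hnr.symm hvm.symm)).elim
    by_cases hwm : w = m
    · subst hwm
      exact (hT (triangleC3_isContained hmn hnv hvw.symm)).elim
    exact (hP (pathGraph_five_isContained hrm hmn hnv hvw hnr.symm hvr.symm (Ne.symm hwr)
      hvm.symm (Ne.symm hwm) (Ne.symm hwn))).elim

theorem Reachable.exists_layer (hr : (G.neighborSet r).Subsingleton) (hT : triangleC3.Free G)
    (hC : cycleC4.Free G) (hP : (pathGraph 5).Free G) {v : V} (hrv : G.Reachable r v) :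
    ∃ k, G.layer r k v := by
  rw [reachable_iff_reflTransGen] at hrv
  induction hrv with
  | refl => exact ⟨0, rfl⟩
  | tail _ hvw ih =>
    obtain ⟨k, hk⟩ := ih
    obtain ⟨l, -, hl⟩ := layer_step hr hT hC hP hk hvw
    exact ⟨l, hl⟩

theorem neighborSet_subsingleton_of_adj (hT : triangleC3.Free G) (hC : cycleC4.Free G)
    (hP : (pathGraph 5).Free G) {b v a e : V} (hbv : G.Adj b v) (hva : G.Adj v a)
    (hae : G.Adj a e) (hba : b ≠ a) (hve : v ≠ e) : (G.neighborSet e).Subsingleton := by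
  have hbe : b ≠ e := by
    rintro rfl
    exact hT (triangleC3_isContained hbv hva hae.symm)
  suffices h : ∀ y, G.Adj e y → y = a from fun y hy z hz ↦ (h y hy).trans (h z hz).symm
  intro y hey
  by_contra hya
  have hyv : y ≠ v := by
    rintro rfl
    exact hT (triangleC3_isContained hva hae hey.symm)
  have hyb : y ≠ b := by
    rintro rfl
    exact hC (cycleC4_isContained hbv hva hae hey hba hve)
  exact hP (pathGraph_five_isContained hey.symm hae.symm hva.symm hbv.symm hya hyv hyb
    (Ne.symm hve) (Ne.symm hbe) (Ne.symm hba))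

theorem exists_reachable_of_neighborSet_subsingleton (hT : triangleC3.Free G)
    (hC : cycleC4.Free G) (hP : (pathGraph 5).Free G) (v : V) :
    ∃ r, (G.neighborSet r).Subsingleton ∧ G.Reachable r v := by
  by_cases hv : (G.neighborSet v).Subsingleton
  · exact ⟨v, hv, .rfl⟩
  obtain ⟨a, hva, b, hvb, hab⟩ := Set.not_subsingleton_iff.mp hv
  by_cases ha : (G.neighborSet a).Subsingleton
  · exact ⟨a, ha, hva.symm.reachable⟩
  obtain ⟨e, hae, hev⟩ := (Set.not_subsingleton_iff.mp ha).exists_ne v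
  exact ⟨e, neighborSet_subsingleton_of_adj hT hC hP hvb.symm hva hae (Ne.symm hab) (Ne.symm hev),
    (hva.reachable.trans hae.reachable).symm⟩

theorem isContained_unionP3 (hT : triangleC3.Free G) (hC : cycleC4.Free G)
    (hP : (pathGraph 5).Free G) (hY : clawY.Free G) : G ⊑ unionP3 G.ConnectedComponent := by
  have hroot (c : G.ConnectedComponent) :
      ∃ r, (G.neighborSet r).Subsingleton ∧ G.connectedComponentMk r = c :=
    c.ind fun v ↦ (exists_reachable_of_neighborSet_subsingleton hT hC hP v).imp
      fun _ ⟨hr, hrv⟩ ↦ ⟨hr, ConnectedComponent.sound hrv⟩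
  choose root hend hmk using hroot
  have hlayer (v : V) : ∃ k, G.layer (root (G.connectedComponentMk v)) k v :=
    (ConnectedComponent.exact (hmk _)).exists_layer (hend _) hT hC hP
  choose label hlabel using hlayer
  refine ⟨⟨⟨fun v ↦ (G.connectedComponentMk v, label v), fun {u v} huv ↦ ?_⟩, fun u v huv ↦ ?_⟩⟩
  · have hc : G.connectedComponentMk u = G.connectedComponentMk v :=
      ConnectedComponent.sound huv.reachable
    obtain ⟨l, hl, hlv⟩ := layer_step (hend _) hT hC hP (hlabel u) huv
    rw [hc] at hlv
    exact ⟨hc, layer_functional (hend _) hY (hlabel v) hlv ▸ hl⟩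
  · obtain ⟨hc, hk⟩ := Prod.mk.inj huv
    have hv := hlabel v
    rw [← hc, ← hk] at hv
    exact layer_unique (hend _) hY (hlabel u) hv

theorem Reachable.fst_eq_of_unionP3 {ι : Type*} {p q : ι × Fin 4}
    (h : (unionP3 ι).Reachable p q) : p.1 = q.1 := by
  rw [reachable_iff_reflTransGen] at h
  induction h with
  | refl => rfl
  | tail _ hab ih => exact ih.trans hab.1

theorem Connected.free_unionP3 {ι W : Type*} {H : SimpleGraph W} (hH : H.Connected)
    (hfree : H.Free (pathGraph 4)) : H.Free (unionP3 ι) := by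
  rintro ⟨f⟩
  obtain ⟨w₀⟩ := hH.nonempty
  have hfst (w : W) : (f w).1 = (f w₀).1 := ((hH w w₀).map f.toHom).fst_eq_of_unionP3
  exact hfree ⟨⟨⟨fun w ↦ (f w).2, fun h ↦ (f.toHom.map_adj h).2⟩,
    fun u v huv ↦ f.injective (Prod.ext ((hfst u).trans (hfst v).symm) huv)⟩⟩

theorem triangleC3_connected : triangleC3.Connected := connected_top

theorem cycleC4_connected : cycleC4.Connected := by
  refine (pathGraph_connected 3).mono fun i j h ↦ ?_
  rw [pathGraph_adj] at h
  fin_cases i <;> fin_cases j <;> simp_all [cycleC4]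

theorem clawY_connected : clawY.Connected := by
  refine (connected_iff_exists_forall_reachable _).mpr ⟨1, fun w ↦ ?_⟩
  by_cases hw : w = 1
  · exact hw ▸ .rfl
  · exact Adj.reachable (by simp [clawY, Ne.symm hw])

theorem triangleC3_free_pathGraph_four : triangleC3.Free (pathGraph 4) := by
  rintro ⟨f⟩
  have h01 := pathGraph_adj.mp (f.toHom.map_adj (show triangleC3.Adj 0 1 by simp [triangleC3]))
  have h12 := pathGraph_adj.mp (f.toHom.map_adj (show triangleC3.Adj 1 2 by simp [triangleC3]))
  have h02 := pathGraph_adj.mp (f.toHom.map_adj (show triangleC3.Adj 0 2 by simp [triangleC3]))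
  omega

theorem cycleC4_free_pathGraph_four : cycleC4.Free (pathGraph 4) := by
  rintro ⟨f⟩
  have h01 := pathGraph_adj.mp (f.toHom.map_adj (show cycleC4.Adj 0 1 by simp [cycleC4]))
  have h12 := pathGraph_adj.mp (f.toHom.map_adj (show cycleC4.Adj 1 2 by simp [cycleC4]))
  have h23 := pathGraph_adj.mp (f.toHom.map_adj (show cycleC4.Adj 2 3 by simp [cycleC4]))
  have h30 := pathGraph_adj.mp (f.toHom.map_adj (show cycleC4.Adj 3 0 by simp [cycleC4]))
  have h02 := f.injective.ne (show (0 : Fin 4) ≠ 2 by decide)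
  have h13 := f.injective.ne (show (1 : Fin 4) ≠ 3 by decide)
  omega

theorem pathGraph_five_free_pathGraph_four : (pathGraph 5).Free (pathGraph 4) := by
  rintro ⟨f⟩
  simpa using Fintype.card_le_of_injective _ f.injective

theorem clawY_free_pathGraph_four : clawY.Free (pathGraph 4) := by
  rintro ⟨f⟩
  have h10 := pathGraph_adj.mp (f.toHom.map_adj (show clawY.Adj 1 0 by simp [clawY]))
  have h12 := pathGraph_adj.mp (f.toHom.map_adj (show clawY.Adj 1 2 by simp [clawY]))
  have h13 := pathGraph_adj.mp (f.toHom.map_adj (show clawY.Adj 1 3 by simp [clawY]))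
  have h02 := f.injective.ne (show (0 : Fin 4) ≠ 2 by decide)
  have h03 := f.injective.ne (show (0 : Fin 4) ≠ 3 by decide)
  have h23 := f.injective.ne (show (2 : Fin 4) ≠ 3 by decide)
  omega

end SimpleGraph

/-- For a simple graph `G`, the following are equivalent: (i) there is no injective graph
homomorphism from `G` into a disjoint union of copies of the path `P₃`; (ii) `G` contains a
subgraph isomorphic to one of: the triangle `C₃`, the 4-cycle `C₄`, the path `P₄`
(with four edges, i.e. `pathGraph 5`), or the claw `Y`. -/
theorem stmt0 {V : Type u} (G : SimpleGraph V) :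
    (¬ ∃ (ι : Type u) (ψ : G →g unionP3 ι), Function.Injective ψ) ↔
      ((∃ ψ : triangleC3 →g G, Function.Injective ψ) ∨
       (∃ ψ : cycleC4 →g G, Function.Injective ψ) ∨
       (∃ ψ : pathGraph 5 →g G, Function.Injective ψ) ∨
       (∃ ψ : clawY →g G, Function.Injective ψ)) := by
  simp only [← isContained_iff_exists_injective_hom]
  refine ⟨fun h ↦ ?_, fun h ⟨ι, hG⟩ ↦ ?_⟩
  · by_contra hfree
    obtain ⟨hT, hC, hP, hY⟩ := by simpa only [not_or] using hfree
    exact h ⟨_, isContained_unionP3 hT hC hP hY⟩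
  · rcases h with h | h | h | h
    · exact triangleC3_connected.free_unionP3 triangleC3_free_pathGraph_four (h.trans hG)
    · exact cycleC4_connected.free_unionP3 cycleC4_free_pathGraph_four (h.trans hG)
    · exact (pathGraph_connected 4).free_unionP3 pathGraph_five_free_pathGraph_four (h.trans hG)
    · exact clawY_connected.free_unionP3 clawY_free_pathGraph_four (h.trans hG)
end

section
/- Let G be a simple graph and (H,f) an object of the slice category Gra/G. Assume that for every connected component A of H the object (A, f restricted to A) is rigid in Gra/G, and that for every two distinct connected components A and B of H neither f[A] ⊆ f[B] nor f[B] ⊆ f[A] holds (where f[A] denotes the image of the vertex set of A under f). Then (H,f) is rigid in Gra/G. -/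
open SimpleGraph

/-- Let `G` be a simple graph and `(H, f)` an object of the slice category `Gra/G`.
Assume that for every connected component `A` of `H` the object `(A, f|A)` is rigid in
`Gra/G` (its only slice endomorphism is the identity), and that for any two distinct
connected components `A`, `B` of `H` the image `f[A]` is not contained in `f[B]`
(by symmetry of the quantification this also gives `f[B] ⊄ f[A]`). Then `(H, f)` is rigid
in `Gra/G`. -/
theorem stmt2 {U V : Type*} (G : SimpleGraph U) (H : SimpleGraph V) (f : H →g G)
    (hrigid : ∀ c : H.ConnectedComponent,
      ∀ ψ : H.induce c.supp →g H.induce c.supp,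
        (∀ x : c.supp, f ((ψ x : c.supp) : V) = f (x : V)) → ∀ x, ψ x = x)
    (himg : ∀ c d : H.ConnectedComponent, c ≠ d → ¬ ((⇑f '' c.supp) ⊆ (⇑f '' d.supp))) :
    ∀ ψ : H →g H, (∀ x, f (ψ x) = f x) → ∀ x, ψ x = x := by
  intro ψ hf x
  -- every component is mapped into itself
  have hmap : ∀ c : H.ConnectedComponent, c.map ψ = c := by
    intro c
    by_contra h
    apply himg c (c.map ψ) (Ne.symm h)
    rintro y ⟨z, hz, rfl⟩
    refine ⟨ψ z, ?_, hf z⟩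
    rw [ConnectedComponent.mem_supp_iff] at hz ⊢
    rw [← hz, ConnectedComponent.map_mk]
  set c := H.connectedComponentMk x with hc
  have hmem : ∀ z : V, z ∈ c.supp → ψ z ∈ c.supp := by
    intro z hz
    rw [ConnectedComponent.mem_supp_iff] at hz ⊢
    rw [← hmap c, ← hz, ConnectedComponent.map_mk]
  let ψc : H.induce c.supp →g H.induce c.supp :=
    { toFun := fun z => ⟨ψ z.1, hmem z.1 z.2⟩
      map_rel' := fun hab => ψ.map_adj hab }
  have hx : x ∈ c.supp := rfl
  have := hrigid c ψc (fun z => hf z.1) ⟨x, hx⟩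
  exact congrArg Subtype.val this
end

section
/- Fix n ∈ {0,1,2,3}. Let H be a connected simple graph and f : H → P_n a surjective graph homomorphism (surjective on vertices). Then the object (H,f) of the slice category Gra/P_n is either rigid or has a proper endomorphism. -/
open SimpleGraph

namespace Stmt3Aux

variable {V : Type*} {H : SimpleGraph V}

/-- The conclusion: rigid or possessing a proper slice endomorphism. -/
def Concl3 (H : SimpleGraph V) (f : H →g pathGraph 4) : Prop :=
  (∀ ψ : H →g H, (∀ x, f (ψ x) = f x) → ∀ x, ψ x = x) ∨
  (∃ φ : H →g H, (∀ x, f (φ x) = f x) ∧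
    ¬ ∃ ψ : H →g H, (∀ x, f (ψ x) = f x) ∧
      (∀ x, ψ (φ x) = x) ∧ (∀ x, φ (ψ x) = x))

/-- A zigzag grading of `(H, f)` of half-length `h` (total length `2h+1`). -/
structure Grad (f : H →g pathGraph 4) (h : ℕ) (μ : V → ℕ) : Prop where
  adj : ∀ ⦃x y⦄, H.Adj x y → μ y = μ x + 1 ∨ μ x = μ y + 1
  le : ∀ x, μ x ≤ 2*h+1
  fconst : ∀ x y, μ x = μ y → f x = f y
  zero : ∀ x, μ x = 0 ↔ f x = 0
  top : ∀ x, μ x = 2*h+1 ↔ f x = 3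
  hpos : 1 ≤ h
  down : ∀ x, 0 < μ x → μ x < h → ∃ y, H.Adj x y ∧ μ y + 1 = μ x
  up : ∀ x, h + 1 < μ x → μ x < 2*h+1 → ∃ y, H.Adj x y ∧ μ y = μ x + 1

def IsLow (μ : V → ℕ) (h : ℕ) (x : V) : Prop := ∃ y, H.Adj x y ∧ μ y + 1 = h

def IsHigh (μ : V → ℕ) (h : ℕ) (x : V) : Prop := ∃ y, H.Adj x y ∧ μ y = h + 2

def LowHigh (H : SimpleGraph V) (μ : V → ℕ) (h : ℕ) : Prop :=
  ∃ x y, H.Adj x y ∧ μ x = h ∧ μ y = h + 1 ∧ IsLow (H := H) μ h x ∧ IsHigh (H := H) μ h y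

lemma Grad.walk_le {f : H →g pathGraph 4} {h μ} (G : Grad f h μ) {u v : V}
    (p : H.Walk u v) : μ v ≤ μ u + p.length := by
  induction p with
  | nil => simp
  | cons hadj q ih =>
    rcases G.adj hadj with h1 | h1 <;> simp only [Walk.length_cons] <;> omega

/-- Refinement: if there is no low–high middle edge, the grading refines. -/
lemma Grad.refine {f : H →g pathGraph 4} {h μ} (G : Grad f h μ)
    (hnlh : ¬ LowHigh H μ h) : ∃ μ', Grad f (h+1) μ' := by
  classical
  refine ⟨fun x => if μ x < h then μ x else if μ x = h then (if IsLow (H := H) μ h x then h else h + 2)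
    else if μ x = h + 1 then (if IsHigh (H := H) μ h x then h + 3 else h + 1) else μ x + 2, ?_⟩
  set μ' : V → ℕ := fun x => if μ x < h then μ x else if μ x = h then (if IsLow (H := H) μ h x then h else h + 2)
    else if μ x = h + 1 then (if IsHigh (H := H) μ h x then h + 3 else h + 1) else μ x + 2 with hμ'
  have cA : ∀ x, μ x < h → μ' x = μ x := by intro x hx; simp only [hμ', if_pos hx]
  have cB : ∀ x, μ x = h → IsLow (H := H) μ h x → μ' x = h := by
    intro x hx hl; simp only [hμ']; rw [if_neg (by omega), if_pos hx, if_pos hl]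
  have cC : ∀ x, μ x = h → ¬ IsLow (H := H) μ h x → μ' x = h + 2 := by
    intro x hx hl; simp only [hμ']; rw [if_neg (by omega), if_pos hx, if_neg hl]
  have cD : ∀ x, μ x = h + 1 → IsHigh (H := H) μ h x → μ' x = h + 3 := by
    intro x hx hl; simp only [hμ']
    rw [if_neg (by omega), if_neg (by omega), if_pos hx, if_pos hl]
  have cE : ∀ x, μ x = h + 1 → ¬ IsHigh (H := H) μ h x → μ' x = h + 1 := by
    intro x hx hl; simp only [hμ']
    rw [if_neg (by omega), if_neg (by omega), if_pos hx, if_neg hl]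
  have cF : ∀ x, h + 1 < μ x → μ' x = μ x + 2 := by
    intro x hx; simp only [hμ']
    rw [if_neg (by omega), if_neg (by omega), if_neg (by omega)]
  have char : ∀ x, (μ' x = μ x ∧ μ x ≤ h + 1) ∨ (μ' x = μ x + 2 ∧ h ≤ μ x) := by
    intro x
    rcases Nat.lt_trichotomy (μ x) h with hx | hx | hx
    · exact Or.inl ⟨cA x hx, by omega⟩
    · by_cases hl : IsLow (H := H) μ h x
      · exact Or.inl ⟨by rw [cB x hx hl, hx], by omega⟩
      · exact Or.inr ⟨by rw [cC x hx hl, hx], by omega⟩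
    · rcases Nat.lt_or_ge (h+1) (μ x) with hx2 | hx2
      · exact Or.inr ⟨cF x hx2, by omega⟩
      · have hx1 : μ x = h + 1 := by omega
        by_cases hl : IsHigh (H := H) μ h x
        · exact Or.inr ⟨by rw [cD x hx1 hl, hx1], by omega⟩
        · exact Or.inl ⟨by rw [cE x hx1 hl, hx1], by omega⟩
  have adjstep : ∀ x y, H.Adj x y → μ y = μ x + 1 → (μ' y = μ' x + 1 ∨ μ' x = μ' y + 1) := by
    intro x y hxy hstep
    rcases Nat.lt_trichotomy (μ x) h with hx | hx | hx
    · by_cases hy : μ y < h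
      · left; rw [cA x hx, cA y hy, hstep]
      · have hyh : μ y = h := by omega
        have hly : IsLow (H := H) μ h y := ⟨x, hxy.symm, by omega⟩
        left; rw [cB y hyh hly, cA x hx]; omega
    · have hy : μ y = h + 1 := by omega
      by_cases hlx : IsLow (H := H) μ h x
      · by_cases hhy : IsHigh (H := H) μ h y
        · exact absurd ⟨x, y, hxy, hx, hy, hlx, hhy⟩ hnlh
        · left; rw [cB x hx hlx, cE y hy hhy]
      · by_cases hhy : IsHigh (H := H) μ h y
        · left; rw [cC x hx hlx, cD y hy hhy]
        · right; rw [cC x hx hlx, cE y hy hhy]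
    · rcases Nat.lt_or_ge (h+1) (μ x) with hx2 | hx2
      · left; rw [cF x hx2, cF y (by omega)]; omega
      · have hx1 : μ x = h + 1 := by omega
        have hhx : IsHigh (H := H) μ h x := ⟨y, hxy, by omega⟩
        left; rw [cD x hx1 hhx, cF y (by omega)]; omega
  constructor
  · intro x y hxy
    rcases G.adj hxy with hs | hs
    · exact adjstep x y hxy hs
    · exact (adjstep y x hxy.symm hs).symm
  · intro x; have h1 := char x; have h2 := G.le x; omega
  · intro x y hxy
    have h1 := char x; have h2 := char y
    exact G.fconst x y (by omega)
  · intro x; rw [← G.zero x]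
    have h1 := char x; have h2 := G.hpos; omega
  · intro x; rw [← G.top x]
    have h1 := char x; have h2 := G.hpos; have h3 := G.le x; omega
  · omega
  · -- down
    intro x hx0 hxlt
    by_cases hxh : μ x < h
    · have hx' : μ' x = μ x := cA x hxh
      have hx0' : 0 < μ x := by omega
      obtain ⟨y, hadj, hy⟩ := G.down x hx0' hxh
      exact ⟨y, hadj, by rw [cA y (by omega), hx']; omega⟩
    · -- μ x ≥ h; only surviving case: μ x = h and IsLow
      have h1 := char x
      have hxe : μ x = h := by
        rcases h1 with ⟨e, hle⟩ | ⟨e, hge⟩ <;> by_contra hne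
        · have hx1 : μ x = h + 1 := by omega
          by_cases hl : IsHigh (H := H) μ h x
          · rw [cD x hx1 hl] at hxlt; omega
          · rw [cE x hx1 hl] at hxlt; omega
        · omega
      have hl : IsLow (H := H) μ h x := by
        by_contra hnl; rw [cC x hxe hnl] at hxlt; omega
      obtain ⟨y, hadj, hy⟩ := id hl
      refine ⟨y, hadj, ?_⟩
      rw [cA y (by omega), cB x hxe hl]; omega
  · -- up
    intro x hxgt hxlt
    have h1 := char x
    rcases Nat.lt_trichotomy (μ x) h with hx | hx | hx
    · rw [cA x hx] at hxgt; omega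
    · by_cases hl : IsLow (H := H) μ h x
      · rw [cB x hx hl] at hxgt; omega
      · rw [cC x hx hl] at hxgt; omega
    · rcases Nat.lt_or_ge (h+1) (μ x) with hx2 | hx2
      · -- old up applies
        have hxu : μ x < 2*h+1 := by rw [cF x hx2] at hxlt; omega
        obtain ⟨y, hadj, hy⟩ := G.up x hx2 hxu
        refine ⟨y, hadj, ?_⟩
        rw [cF x hx2, cF y (by omega)]; omega
      · have hx1 : μ x = h + 1 := by omega
        have hh : IsHigh (H := H) μ h x := by
          by_contra hnh; rw [cE x hx1 hnh] at hxgt; omega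
        obtain ⟨y, hadj, hy⟩ := id hh
        refine ⟨y, hadj, ?_⟩
        rw [cD x hx1 hh, cF y (by omega)]; omega

/-- Descend from a vertex of grade `≤ h` to grade `0`. -/
lemma Grad.descend {f : H →g pathGraph 4} {h μ} (G : Grad f h μ) :
    ∀ s (x : V), μ x = s → s ≤ h → (μ x = h → IsLow (H := H) μ h x) →
      ∃ b : ℕ → V, b (μ x) = x ∧ (∀ j, j + 1 ≤ μ x → H.Adj (b j) (b (j+1))) ∧
        (∀ j, j ≤ μ x → μ (b j) = j) := by
  classical
  intro s
  induction s with
  | zero =>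
    intro x hx _ _
    refine ⟨fun _ => x, rfl, fun j hj => absurd hj (by omega), fun j hj => ?_⟩
    show μ x = j
    omega
  | succ s ih =>
    intro x hx hsh hlow
    obtain ⟨y, hadj, hy⟩ : ∃ y, H.Adj x y ∧ μ y + 1 = μ x := by
      by_cases hxh : μ x = h
      · obtain ⟨y, hadj, hy⟩ := hlow hxh
        exact ⟨y, hadj, by omega⟩
      · exact G.down x (by omega) (by omega)
    obtain ⟨b, hb0, hb1, hb2⟩ := ih y (by omega) (by omega) (fun hyh => absurd hyh (by omega))
    refine ⟨Function.update b (μ x) x, ?_, ?_, ?_⟩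
    · rw [Function.update_self]
    · intro j hj
      by_cases hje : j + 1 = μ x
      · rw [Function.update_of_ne (show j ≠ μ x by omega), hje, Function.update_self]
        have hbj : b j = y := by rw [show j = μ y by omega]; exact hb0
        rw [hbj]; exact hadj.symm
      · rw [Function.update_of_ne (show j ≠ μ x by omega),
          Function.update_of_ne (show j + 1 ≠ μ x by omega)]
        exact hb1 j (by omega)
    · intro j hj
      by_cases hje : j = μ x
      · rw [hje, Function.update_self]
      · rw [Function.update_of_ne (show j ≠ μ x by omega)]
        exact hb2 j (by omega)

/-- Ascend from a vertex of grade `≥ h+1` to grade `2h+1`. -/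
lemma Grad.ascend {f : H →g pathGraph 4} {h μ} (G : Grad f h μ) :
    ∀ s (x : V), s + μ x = 2*h+1 → h + 1 ≤ μ x → (μ x = h + 1 → IsHigh (H := H) μ h x) →
      ∃ b : ℕ → V, b (μ x) = x ∧ (∀ j, μ x ≤ j → j < 2*h+1 → H.Adj (b j) (b (j+1))) ∧
        (∀ j, μ x ≤ j → j ≤ 2*h+1 → μ (b j) = j) := by
  classical
  intro s
  induction s with
  | zero =>
    intro x hx _ _
    refine ⟨fun _ => x, rfl, fun j hj1 hj2 => absurd hj2 (by omega), fun j hj1 hj2 => ?_⟩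
    show μ x = j
    omega
  | succ s ih =>
    intro x hx hxh hhigh
    obtain ⟨y, hadj, hy⟩ : ∃ y, H.Adj x y ∧ μ y = μ x + 1 := by
      by_cases hxe : μ x = h + 1
      · obtain ⟨y, h1, h2⟩ := hhigh hxe
        exact ⟨y, h1, by omega⟩
      · exact G.up x (by omega) (by omega)
    obtain ⟨b, hb0, hb1, hb2⟩ := ih y (by omega) (by omega) (fun hyh => absurd hyh (by omega))
    refine ⟨Function.update b (μ x) x, ?_, ?_, ?_⟩
    · rw [Function.update_self]
    · intro j hj1 hj2
      by_cases hje : j = μ x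
      · rw [hje, Function.update_self,
          Function.update_of_ne (show μ x + 1 ≠ μ x by omega)]
        have hbj : b (μ x + 1) = y := by rw [show μ x + 1 = μ y by omega]; exact hb0
        rw [hbj]; exact hadj
      · rw [Function.update_of_ne (show j ≠ μ x by omega),
          Function.update_of_ne (show j + 1 ≠ μ x by omega)]
        exact hb1 j (by omega) hj2
    · intro j hj1 hj2
      by_cases hje : j = μ x
      · rw [hje, Function.update_self]
      · rw [Function.update_of_ne (show j ≠ μ x by omega)]
        exact hb2 j (by omega) hj2

/-- A low–high middle edge yields a spanning monotone path. -/
lemma Grad.spanning {f : H →g pathGraph 4} {h μ} (G : Grad f h μ)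
    (hlh : LowHigh H μ h) :
    ∃ b : ℕ → V, (∀ j, j < 2*h+1 → H.Adj (b j) (b (j+1))) ∧
      (∀ j, j ≤ 2*h+1 → μ (b j) = j) := by
  obtain ⟨x, y, hxy, hx, hy, hlx, hhy⟩ := hlh
  obtain ⟨b₁, hb10, hb11, hb12⟩ := G.descend (μ x) x rfl (by omega) (fun _ => hlx)
  obtain ⟨b₂, hb20, hb21, hb22⟩ := G.ascend h y (by omega) (by omega) (fun _ => hhy)
  classical
  refine ⟨fun j => if j ≤ h then b₁ j else b₂ j, ?_, ?_⟩
  · intro j hj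
    by_cases hj1 : j + 1 ≤ h
    · simp only [if_pos (by omega : j ≤ h), if_pos hj1]
      exact hb11 j (by omega)
    · by_cases hj2 : j ≤ h
      · have hje : j = h := by omega
        simp only [if_pos hj2, if_neg hj1]
        have e1 : b₁ j = x := by rw [hje, ← hx]; exact hb10
        have e2 : b₂ (j+1) = y := by rw [show j + 1 = μ y by omega]; exact hb20
        rw [e1, e2]; exact hxy
      · simp only [if_neg hj2, if_neg (by omega : ¬ j + 1 ≤ h)]
        exact hb21 j (by omega) hj
  · intro j hj
    by_cases hj2 : j ≤ h
    · simp only [if_pos hj2]; exact hb12 j (by omega)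
    · simp only [if_neg hj2]; exact hb22 j (by omega) hj

/-- Collapse along a spanning monotone path, or rigidity. -/
lemma Grad.concl {f : H →g pathGraph 4} {h μ} (G : Grad f h μ) (b : ℕ → V)
    (hb1 : ∀ j, j < 2*h+1 → H.Adj (b j) (b (j+1)))
    (hb2 : ∀ j, j ≤ 2*h+1 → μ (b j) = j) : Concl3 H f := by
  classical
  by_cases hinj : ∀ x y : V, μ x = μ y → x = y
  · -- rigid
    left
    intro ψ hψ x
    have hbx : ∀ z : V, b (μ z) = z := fun z => hinj _ _ (hb2 (μ z) (G.le z))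
    have hw0 : μ (ψ (b 0)) = 0 := by
      rw [G.zero, hψ]
      rw [← G.zero]; exact hb2 0 (by omega)
    have hwtop : μ (ψ (b (2*h+1))) = 2*h+1 := by
      rw [G.top, hψ]
      rw [← G.top]; exact hb2 (2*h+1) le_rfl
    have hstep : ∀ j, j < 2*h+1 →
        (μ (ψ (b (j+1))) = μ (ψ (b j)) + 1 ∨ μ (ψ (b j)) = μ (ψ (b (j+1))) + 1) :=
      fun j hj => G.adj (ψ.map_adj (hb1 j hj))
    have hub : ∀ j, j ≤ 2*h+1 → μ (ψ (b j)) ≤ j := by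
      intro j
      induction j with
      | zero => intro _; omega
      | succ j ihj =>
        intro hj
        have h1 := hstep j (by omega)
        have h2 := ihj (by omega)
        omega
    have hlb : ∀ d j, j + d = 2*h+1 → j ≤ μ (ψ (b j)) := by
      intro d
      induction d with
      | zero =>
        intro j hj
        have hje : j = 2*h+1 := by omega
        rw [hje]
        omega
      | succ d ihd =>
        intro j hj
        have h1 := ihd (j+1) (by omega)
        have h2 := hstep j (by omega)
        omega
    have h1 := hub (μ x) (G.le x)
    have h2 := hlb (2*h+1 - μ x) (μ x) (by have := G.le x; omega)
    rw [hbx x] at h1 h2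
    exact hinj _ _ (by omega)
  · push_neg at hinj
    obtain ⟨x, y, hμxy, hne⟩ := hinj
    right
    refine ⟨⟨fun z => b (μ z), ?_⟩, ?_, ?_⟩
    · intro a c hac
      show H.Adj (b (μ a)) (b (μ c))
      rcases G.adj hac with hs | hs
      · rw [hs]
        exact hb1 (μ a) (by have := G.le c; omega)
      · rw [hs]
        exact (hb1 (μ c) (by have := G.le a; omega)).symm
    · intro z
      exact G.fconst _ _ (hb2 (μ z) (G.le z))
    · rintro ⟨ψ, -, hl, -⟩
      apply hne
      calc x = ψ (b (μ x)) := (hl x).symm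
        _ = ψ (b (μ y)) := by rw [hμxy]
        _ = y := hl y

/-- The master lemma for `n = 3`. -/
lemma master (hconn : H.Connected) (f : H →g pathGraph 4)
    (hsurj : Function.Surjective f) : Concl3 H f := by
  classical
  obtain ⟨u0, hu0⟩ := hsurj 0
  obtain ⟨u3, hu3⟩ := hsurj 3
  have hreach := hconn.preconnected u0 u3
  obtain p := hreach.some
  have G0 : Grad f 1 (fun x => (f x).val) := by
    constructor
    · intro x y hxy
      have := pathGraph_adj.mp (f.map_adj hxy)
      omega
    · intro x; have := (f x).isLt; omega
    · intro x y hxy; exact Fin.val_injective hxy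
    · intro x
      constructor
      · intro hx; exact Fin.val_injective (by rw [hx]; rfl)
      · intro hx; rw [hx]; rfl
    · intro x
      constructor
      · intro hx; exact Fin.val_injective (by rw [hx]; rfl)
      · intro hx; rw [hx]; rfl
    · omega
    · intro x h1 h2; omega
    · intro x h1 h2; have := (f x).isLt; omega
  suffices hdr : ∀ d (h : ℕ) (μ : V → ℕ), Grad f h μ → p.length ≤ 2*h+1+d → Concl3 H f by
    exact hdr p.length 1 _ G0 (by omega)
  intro d
  induction d with
  | zero =>
    intro h μ G hle
    by_cases hlh : LowHigh H μ h
    · obtain ⟨b, hb1, hb2⟩ := G.spanning hlh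
      exact G.concl b hb1 hb2
    · obtain ⟨μ', G'⟩ := G.refine hlh
      have hw := G'.walk_le p
      have h3 : μ' u3 = 2*(h+1)+1 := (G'.top u3).mpr hu3
      have h0 : μ' u0 = 0 := (G'.zero u0).mpr hu0
      omega
  | succ d ihd =>
    intro h μ G hle
    by_cases hlh : LowHigh H μ h
    · obtain ⟨b, hb1, hb2⟩ := G.spanning hlh
      exact G.concl b hb1 hb2
    · obtain ⟨μ', G'⟩ := G.refine hlh
      exact ihd (h+1) μ' G' (by omega)

/-- First-hitting lemma for `n = 2`: a monotone path exists. -/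
lemma mono3 {f : H →g pathGraph (2+1)} {v w : V} (p : H.Walk v w) :
    (f v = 0 ∨ (f v = 1 ∧ ∃ a, H.Adj v a ∧ f a = 0)) → f w = 2 →
    ∃ a b c, H.Adj a b ∧ H.Adj b c ∧ f a = 0 ∧ f b = 1 ∧ f c = 2 := by
  induction p with
  | nil =>
    rintro (hv | ⟨hv, -⟩) hw <;> rw [hv] at hw <;> exact absurd hw (by decide)
  | @cons v v' w hadj q ih =>
    intro hv hw
    have hpv := pathGraph_adj.mp (f.map_adj hadj)
    rcases hv with hv | ⟨hv, a, ha, ha0⟩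
    · have hv0 : (f v).val = 0 := by rw [hv]; rfl
      have hv'1 : f v' = 1 := by
        apply Fin.val_injective
        have : ((1 : Fin (2+1))).val = 1 := rfl
        omega
      exact ih (Or.inr ⟨hv'1, v, hadj.symm, hv⟩) hw
    · have hv1 : (f v).val = 1 := by rw [hv]; rfl
      have hlt := (f v').isLt
      by_cases hv'2 : (f v').val = 2
      · refine ⟨a, v, v', ha.symm, hadj, ha0, hv, ?_⟩
        apply Fin.val_injective
        have : ((2 : Fin (2+1))).val = 2 := rfl
        omega
      · have hv'0 : f v' = 0 := by
          apply Fin.val_injective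
          have : ((0 : Fin (2+1))).val = 0 := rfl
          omega
        exact ih (Or.inl hv'0) hw

end Stmt3Aux

open Stmt3Aux

/-- Fix `n ∈ {0,1,2,3}`. Let `H` be a connected simple graph and `f : H → Pₙ` a surjective
graph homomorphism, where `Pₙ` is the path with `n` edges and `n+1` vertices
(`pathGraph (n+1)` in Mathlib). Then the object `(H, f)` of the slice category `Gra/Pₙ` is
either rigid (its only slice endomorphism is the identity) or it has a proper endomorphism
(a slice endomorphism with no two-sided inverse morphism in the slice). -/
theorem stmt3 (n : ℕ) (hn : n ∈ ({0, 1, 2, 3} : Set ℕ)) {V : Type*} (H : SimpleGraph V)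
    (hconn : H.Connected) (f : H →g pathGraph (n + 1)) (hsurj : Function.Surjective f) :
    (∀ ψ : H →g H, (∀ x, f (ψ x) = f x) → ∀ x, ψ x = x) ∨
    (∃ φ : H →g H, (∀ x, f (φ x) = f x) ∧
      ¬ ∃ ψ : H →g H, (∀ x, f (ψ x) = f x) ∧
        (∀ x, ψ (φ x) = x) ∧ (∀ x, φ (ψ x) = x)) := by
  classical
  simp only [Set.mem_insert_iff, Set.mem_singleton_iff] at hn
  rcases hn with rfl | rfl | rfl | rfl
  · -- n = 0
    left
    intro ψ hψ x
    have hne : ∀ a b : V, ¬ H.Adj a b := by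
      intro a b hab
      have := pathGraph_adj.mp (f.map_adj hab)
      have h1 := (f a).isLt
      have h2 := (f b).isLt
      omega
    have hsub : ∀ a b : V, a = b := by
      intro a b
      have hr := hconn.preconnected a b
      obtain q := hr.some
      cases q with
      | nil => rfl
      | cons h _ => exact absurd h (hne _ _)
    exact hsub _ _
  · -- n = 1
    by_cases hinj : ∀ x y : V, f x = f y → x = y
    · left; intro ψ hψ x; exact hinj _ _ (hψ x)
    · right
      push_neg at hinj
      obtain ⟨x, y, hfxy, hxy⟩ := hinj
      have hr := hconn.preconnected x y
      obtain q := hr.some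
      have hedge : ∃ a b : V, H.Adj a b := by
        cases q with
        | nil => exact absurd rfl hxy
        | cons h _ => exact ⟨_, _, h⟩
      obtain ⟨a, b, hab⟩ := hedge
      have hadj := pathGraph_adj.mp (f.map_adj hab)
      have e0 : ((0 : Fin (1+1))).val = 0 := rfl
      have e1 : ((1 : Fin (1+1))).val = 1 := rfl
      have hlta := (f a).isLt
      have hltb := (f b).isLt
      obtain ⟨a', b', hab', ha0, hb1⟩ : ∃ a' b', H.Adj a' b' ∧ f a' = 0 ∧ f b' = 1 := by
        rcases hadj with hor | hor
        · exact ⟨a, b, hab, Fin.val_injective (by omega), Fin.val_injective (by omega)⟩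
        · exact ⟨b, a, hab.symm, Fin.val_injective (by omega), Fin.val_injective (by omega)⟩
      refine ⟨⟨fun z => if f z = 0 then a' else b', ?_⟩, ?_, ?_⟩
      · intro u v huv
        show H.Adj (if f u = 0 then a' else b') (if f v = 0 then a' else b')
        have hpv := pathGraph_adj.mp (f.map_adj huv)
        have hltu := (f u).isLt
        have hltv := (f v).isLt
        by_cases hu : f u = 0
        · have hu' : (f u).val = 0 := by rw [hu]; exact e0
          have hv : ¬ f v = 0 := by
            intro hv
            have : (f v).val = 0 := by rw [hv]; exact e0
            omega
          simp only [if_pos hu, if_neg hv]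
          exact hab'
        · have hu' : (f u).val ≠ 0 := fun hh => hu (Fin.val_injective (by omega))
          have hv : f v = 0 := Fin.val_injective (by omega)
          simp only [if_neg hu, if_pos hv]
          exact hab'.symm
      · intro z
        show f (if f z = 0 then a' else b') = f z
        have hltz := (f z).isLt
        by_cases hz : f z = 0
        · rw [if_pos hz, ha0, hz]
        · have hz' : (f z).val ≠ 0 := fun hh => hz (Fin.val_injective (by omega))
          have hz1 : f z = 1 := Fin.val_injective (by omega)
          rw [if_neg hz, hb1, hz1]
      · rintro ⟨ψ, -, hl, -⟩
        apply hxy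
        calc x = ψ (if f x = 0 then a' else b') := (hl x).symm
          _ = ψ (if f y = 0 then a' else b') := by rw [hfxy]
          _ = y := hl y
  · -- n = 2
    by_cases hinj : ∀ x y : V, f x = f y → x = y
    · left; intro ψ hψ x; exact hinj _ _ (hψ x)
    · right
      push_neg at hinj
      obtain ⟨x, y, hfxy, hxy⟩ := hinj
      obtain ⟨u, hu⟩ := hsurj 0
      obtain ⟨w, hw⟩ := hsurj 2
      have hr := hconn.preconnected u w
      obtain q := hr.some
      obtain ⟨a0, a1, a2, h01, h12, ha0, ha1, ha2⟩ := mono3 q (Or.inl hu) hw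
      have e0 : ((0 : Fin (2+1))).val = 0 := rfl
      have e1 : ((1 : Fin (2+1))).val = 1 := rfl
      have e2 : ((2 : Fin (2+1))).val = 2 := rfl
      have key : ∀ s t : V, H.Adj s t → (f s).val + 1 = (f t).val →
          H.Adj (if f s = 0 then a0 else if f s = 1 then a1 else a2)
                (if f t = 0 then a0 else if f t = 1 then a1 else a2) := by
        intro s t hst hv
        have hlts := (f s).isLt
        have hltt := (f t).isLt
        by_cases hs : f s = 0
        · have hs' : (f s).val = 0 := by rw [hs]; exact e0
          have ht1 : f t = 1 := Fin.val_injective (by omega)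
          have ht0 : ¬ f t = 0 := by
            intro hh; rw [hh] at ht1; exact absurd ht1 (by decide)
          simp only [if_pos hs, if_neg ht0, if_pos ht1]
          exact h01
        · by_cases hs1 : f s = 1
          · have hs' : (f s).val = 1 := by rw [hs1]; exact e1
            have ht2 : f t = 2 := Fin.val_injective (by omega)
            have ht0 : ¬ f t = 0 := by
              intro hh; rw [hh] at ht2; exact absurd ht2 (by decide)
            have ht1 : ¬ f t = 1 := by
              intro hh; rw [hh] at ht2; exact absurd ht2 (by decide)
            simp only [if_neg hs, if_pos hs1, if_neg ht0, if_neg ht1]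
            exact h12
          · exfalso
            have hs0' : (f s).val ≠ 0 := fun hh => hs (Fin.val_injective (by omega))
            have hs1' : (f s).val ≠ 1 := fun hh => hs1 (Fin.val_injective (by omega))
            omega
      refine ⟨⟨fun z => if f z = 0 then a0 else if f z = 1 then a1 else a2, ?_⟩, ?_, ?_⟩
      · intro s t hst
        show H.Adj (if f s = 0 then a0 else if f s = 1 then a1 else a2)
          (if f t = 0 then a0 else if f t = 1 then a1 else a2)
        have hpv := pathGraph_adj.mp (f.map_adj hst)
        rcases hpv with hor | hor
        · exact key s t hst hor
        · exact (key t s hst.symm hor).symm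
      · intro z
        show f (if f z = 0 then a0 else if f z = 1 then a1 else a2) = f z
        have hltz := (f z).isLt
        by_cases hz : f z = 0
        · rw [if_pos hz, ha0, hz]
        · by_cases hz1 : f z = 1
          · rw [if_neg hz, if_pos hz1, ha1, hz1]
          · have hz0' : (f z).val ≠ 0 := fun hh => hz (Fin.val_injective (by omega))
            have hz1' : (f z).val ≠ 1 := fun hh => hz1 (Fin.val_injective (by omega))
            have hz2 : f z = 2 := Fin.val_injective (by omega)
            rw [if_neg hz, if_neg hz1, ha2, hz2]
      · rintro ⟨ψ, -, hl, -⟩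
        apply hxy
        calc x = ψ (if f x = 0 then a0 else if f x = 1 then a1 else a2) := (hl x).symm
          _ = ψ (if f y = 0 then a0 else if f y = 1 then a1 else a2) := by rw [hfxy]
          _ = y := hl y
  · -- n = 3
    exact master hconn f hsurj
end

section
/- Let A and B be connected simple graphs and let f : A → P_3 and g : B → P_3 be graph homomorphisms such that the vertex image f[A] is contained in the vertex image g[B]. Then there exists either a morphism (A,f) → (B,g) or a morphism (B,g) → (A,f) in the slice category Gra/P_3 (i.e., either a graph homomorphism ψ : A → B with g ∘ ψ = f, or a graph homomorphism ψ : B → A with f ∘ ψ = g). -/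
open SimpleGraph


private lemma walk_take {V : Type*} {G : SimpleGraph V} :
    ∀ {u v : V} (w : G.Walk u v) (i : ℕ), i ≤ w.length →
      ∃ w' : G.Walk u (w.getVert i), w'.length = i := by
  intro u v w
  induction w with
  | nil =>
    intro i hi
    simp only [Walk.length_nil, Nat.le_zero] at hi
    subst hi
    exact ⟨Walk.nil, rfl⟩
  | cons h q ih =>
    intro i hi
    cases i with
    | zero => exact ⟨Walk.nil.copy rfl (Walk.getVert_zero _).symm, by simp⟩
    | succ n =>
      obtain ⟨w', hw'⟩ := ih n (by simpa using hi)
      exact ⟨(w'.cons h).copy rfl (Walk.getVert_cons_succ _ _).symm, by simp [hw']⟩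

private lemma walk_drop {V : Type*} {G : SimpleGraph V} :
    ∀ {u v : V} (w : G.Walk u v) (i : ℕ),
      ∃ w' : G.Walk (w.getVert i) v, w'.length = w.length - i := by
  intro u v w
  induction w with
  | nil =>
    intro i
    exact ⟨Walk.nil.copy (by cases i <;> rfl) rfl, by simp⟩
  | cons h q ih =>
    intro i
    cases i with
    | zero =>
      exact ⟨(q.cons h).copy (Walk.getVert_zero _).symm rfl, by simp⟩
    | succ n =>
      obtain ⟨w', hw'⟩ := ih n
      exact ⟨w'.copy (Walk.getVert_cons_succ _ _).symm rfl, by simp [hw']⟩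

private lemma walk_parity {V : Type*} {G : SimpleGraph V} (f : G →g pathGraph 4) :
    ∀ {u v : V} (w : G.Walk u v), (w.length + (f u).val + (f v).val) % 2 = 0 := by
  intro u v w
  induction w with
  | nil => simp only [Walk.length_nil]; omega
  | cons h q ih =>
    have hadj := f.map_adj h
    rw [pathGraph_adj] at hadj
    simp only [Walk.length_cons] at *
    omega

private lemma walk_val_le {V : Type*} {G : SimpleGraph V} (f : G →g pathGraph 4) :
    ∀ {u v : V} (w : G.Walk u v),
      (f v).val ≤ (f u).val + w.length ∧ (f u).val ≤ (f v).val + w.length := by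
  intro u v w
  induction w with
  | nil => omega
  | cons h q ih =>
    have hadj := f.map_adj h
    rw [pathGraph_adj] at hadj
    simp only [Walk.length_cons] at *
    omega

private lemma ivt_aux (vv : ℕ → ℕ) (L c : ℕ)
    (hstep : ∀ i < L, vv (i+1) = vv i + 1 ∨ vv i = vv (i+1) + 1) :
    ∀ k p, p + k ≤ L → vv p ≤ c → c ≤ vv (p + k) →
      ∃ j, p ≤ j ∧ j ≤ p + k ∧ vv j = c := by
  intro k
  induction k with
  | zero =>
    intro p h h1 h2
    rw [Nat.add_zero] at h2
    exact ⟨p, le_refl _, by omega, by omega⟩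
  | succ n ih =>
    intro p h h1 h2
    by_cases hc : c ≤ vv (p + n)
    · obtain ⟨j, hj1, hj2, hj3⟩ := ih p (by omega) h1 hc
      exact ⟨j, hj1, by omega, hj3⟩
    · have hs := hstep (p + n) (by omega)
      have : p + (n + 1) = (p + n) + 1 := by omega
      rw [this] at h2
      exact ⟨p + n + 1, by omega, by omega, by omega⟩

private lemma arith_zero (d e fv m L mu : ℕ)
    (hj : (mu:ℤ) = min (d:ℤ) (max ((L:ℤ)-(e:ℤ)) ((fv:ℤ)-(m:ℤ))))
    (hd0 : d = 0) (hfv : fv = m) : mu = 0 := by omega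

private lemma arith_top (d e fv m M L mu : ℕ)
    (hj : (mu:ℤ) = min (d:ℤ) (max ((L:ℤ)-(e:ℤ)) ((fv:ℤ)-(m:ℤ))))
    (he0 : e = 0) (hge : L ≤ d) (hfv : fv = M) (hML : M ≤ m + L) (hmle : m ≤ fv) :
    mu = L := by omega

private lemma arith_mid (L d e fv m M mu : ℕ)
    (hj : (mu:ℤ) = min (d:ℤ) (max ((L:ℤ)-(e:ℤ)) ((fv:ℤ)-(m:ℤ))))
    (hd0 : d ≠ 0) (he0 : e ≠ 0)
    (hp1 : (d+m+fv)%2=0) (hp2 : (e+fv+M)%2=0) (hpB : (L+m+M)%2=0)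
    (hML : M ≤ m+L) (hm : m < fv) (hM : fv < M) :
    1 ≤ mu ∧ mu < L ∧ (mu+m+fv)%2=0 := by omega

private lemma arith_val (mu m M v fv : ℕ)
    (h6a : m ≤ v) (h6b : v ≤ M) (h4 : v ≠ m) (h5 : v ≠ M)
    (hp : (mu+m+v)%2=0) (hpm : (mu+m+fv)%2=0)
    (hm : m < fv) (hM : fv < M) (hM3 : M ≤ 3) : v = fv := by omega

private lemma arith_step (L d e fv d' e' fv' m M mu mu' : ℕ)
    (hj : (mu:ℤ) = min (d:ℤ) (max ((L:ℤ)-(e:ℤ)) ((fv:ℤ)-(m:ℤ))))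
    (hj' : (mu':ℤ) = min (d':ℤ) (max ((L:ℤ)-(e':ℤ)) ((fv':ℤ)-(m:ℤ))))
    (l1 : d' ≤ d+1) (l2 : d ≤ d'+1) (l3 : e' ≤ e+1) (l4 : e ≤ e'+1)
    (p1 : (d+m+fv)%2=0) (p2 : (d'+m+fv')%2=0) (p3 : (e+fv+M)%2=0) (p4 : (e'+fv'+M)%2=0)
    (hpB : (L+m+M)%2=0)
    (hf : fv+1=fv' ∨ fv'+1=fv) :
    mu' = mu+1 ∨ mu = mu'+1 := by omega

private lemma arith_case0 (LA LB : ℕ) (h1 : LA < LB) (h2 : LB ≤ 0) : False := by omega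

private lemma arith_LB (LA LB m M : ℕ) (hMA : M ≤ m + LA)
    (pA : (LA+m+M)%2=0) (pB : (LB+m+M)%2=0) (hgt : LA < LB) (hmlt : m < M) :
    2 < LB := by omega

private lemma arith_case12 (v1 v2 m M : ℕ) (hc : M ≤ m + 2) (hmlt : m < M)
    (h61a : m ≤ v1) (h61b : v1 ≤ M) (h62a : m ≤ v2) (h62b : v2 ≤ M)
    (h41 : v1 ≠ m) (h42 : v2 ≠ m) (h51 : v1 ≠ M) (h52 : v2 ≠ M)
    (hs1 : v2 = v1 + 1 ∨ v1 = v2 + 1) : False := by omega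

private lemma arith_drop (L i : ℕ) (h : L ≤ L - i) (h0 : 0 < i) (hi : i ≤ L) : False := by
  omega

private lemma ivt' (vv : ℕ → ℕ) (L c : ℕ)
    (hstep : ∀ i < L, vv (i+1) = vv i + 1 ∨ vv i = vv (i+1) + 1)
    (p q : ℕ) (hpq : p ≤ q) (hq : q ≤ L) (h1 : vv p ≤ c) (h2 : c ≤ vv q) :
    ∃ j, p ≤ j ∧ j ≤ q ∧ vv j = c := by
  obtain ⟨j, hj1, hj2, hj3⟩ := ivt_aux vv L c hstep (q - p) p (by omega) h1
    (by rw [show p + (q - p) = q from by omega]; exact h2)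
  exact ⟨j, hj1, by omega, hj3⟩

set_option maxHeartbeats 1000000 in
private lemma key {VA VB : Type*} {A : SimpleGraph VA} {B : SimpleGraph VB}
    (hA : A.Connected) (hB : B.Connected)
    (f : A →g pathGraph 4) (g : B →g pathGraph 4)
    (m M : ℕ)
    (ham : ∃ a, (f a).val = m) (haM : ∃ a, (f a).val = M)
    (hbm : ∃ b, (g b).val = m) (hbM : ∃ b, (g b).val = M)
    (hrange : ∀ a, m ≤ (f a).val ∧ (f a).val ≤ M)
    (hd : M ≤ m + 2 ∨
      sInf {n | ∃ b b', ∃ w : B.Walk b b', (g b).val = m ∧ (g b').val = M ∧ w.length = n} ≤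
      sInf {n | ∃ a a', ∃ w : A.Walk a a', (f a).val = m ∧ (f a').val = M ∧ w.length = n}) :
    ∃ ψ : A →g B, ∀ x, g (ψ x) = f x := by
  classical
  obtain ⟨am, ham⟩ := ham
  obtain ⟨aM, haM⟩ := haM
  obtain ⟨bm, hbm⟩ := hbm
  obtain ⟨bM, hbM⟩ := hbM
  have hSAne : {n | ∃ a a', ∃ w : A.Walk a a',
      (f a).val = m ∧ (f a').val = M ∧ w.length = n}.Nonempty :=
    ⟨_, am, aM, (hA.preconnected am aM).some, ham, haM, rfl⟩
  have hSBne : {n | ∃ b b', ∃ w : B.Walk b b',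
      (g b).val = m ∧ (g b').val = M ∧ w.length = n}.Nonempty :=
    ⟨_, bm, bM, (hB.preconnected bm bM).some, hbm, hbM, rfl⟩
  obtain ⟨a0, a1, wA, ha0, ha1, hwA⟩ := Nat.sInf_mem hSAne
  obtain ⟨b0, b1, W, hb0, hb1, hW⟩ := Nat.sInf_mem hSBne
  rw [← hwA, ← hW] at hd
  have hminA : ∀ x x' (w : A.Walk x x'), (f x).val = m → (f x').val = M →
      wA.length ≤ w.length := by
    intro x x' w h1 h2
    rw [hwA]
    exact Nat.sInf_le ⟨x, x', w, h1, h2, rfl⟩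
  have hminB : ∀ y y' (w : B.Walk y y'), (g y).val = m → (g y').val = M →
      W.length ≤ w.length := by
    intro y y' w h1 h2
    rw [hW]
    exact Nat.sInf_le ⟨y, y', w, h1, h2, rfl⟩
  clear hwA hW hSAne hSBne
  have hmM : m ≤ M := haM ▸ (hrange aM).1
  have hM3 : M ≤ 3 := haM ▸ (f aM).is_le
  have hMA : M ≤ m + wA.length := by
    have h := (walk_val_le f wA).1
    rw [ha0, ha1] at h
    exact h
  have hparA : (wA.length + m + M) % 2 = 0 := by
    have h := walk_parity f wA
    rw [ha0, ha1] at h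
    exact h
  -- the value sequence along W
  have hvvex : ∀ i : ℕ, ∃ k : ℕ, k = (g (W.getVert i)).val := fun i => ⟨_, rfl⟩
  choose vv hvv using hvvex
  have hvv0 : vv 0 = m := by rw [hvv, Walk.getVert_zero]; exact hb0
  have hvvl : vv W.length = M := by rw [hvv, Walk.getVert_length]; exact hb1
  have hstep : ∀ i < W.length, vv (i+1) = vv i + 1 ∨ vv i = vv (i+1) + 1 := by
    intro i hi
    have hadj := g.map_adj (W.adj_getVert_succ hi)
    rw [pathGraph_adj] at hadj
    rw [← hvv i, ← hvv (i+1)] at hadj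
    rcases hadj with h | h
    · exact Or.inl h.symm
    · exact Or.inr h.symm
  have hF5 : ∀ i < W.length, vv i ≠ M := by
    intro i hi hvi
    obtain ⟨w', hw'⟩ := walk_take W i (le_of_lt hi)
    have h := hminB b0 (W.getVert i) w' hb0 (by rw [← hvv]; exact hvi)
    rw [hw'] at h
    exact not_lt.mpr h hi
  have hF4 : ∀ i, 0 < i → i ≤ W.length → vv i ≠ m := by
    intro i h0 hi hvi
    obtain ⟨w', hw'⟩ := walk_drop W i
    have h := hminB (W.getVert i) b1 w' (by rw [← hvv]; exact hvi) hb1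
    rw [hw'] at h
    exact arith_drop _ _ h h0 hi
  have hF6 : ∀ i ≤ W.length, m ≤ vv i ∧ vv i ≤ M := by
    intro i hi
    constructor
    · by_contra hlt
      have hlt' := not_le.mp hlt
      have hi0 : i ≠ 0 := by
        intro h
        rw [h, hvv0] at hlt'
        exact absurd rfl (Nat.ne_of_lt hlt')
      obtain ⟨j, hj1, hj2, hj3⟩ := ivt' vv W.length m hstep i W.length hi (le_refl _)
        (le_of_lt hlt') (by rw [hvvl]; exact hmM)
      exact hF4 j (Nat.pos_of_ne_zero (fun h => hi0 (Nat.le_zero.mp (h ▸ hj1)))) hj2 hj3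
    · by_contra hlt
      have hlt' := not_le.mp hlt
      have hiL : i ≠ W.length := by
        intro h
        rw [h, hvvl] at hlt'
        exact absurd rfl (Nat.ne_of_lt hlt')
      obtain ⟨j, hj1, hj2, hj3⟩ := ivt' vv W.length M hstep 0 i (Nat.zero_le _) hi
        (by rw [hvv0]; exact hmM) (le_of_lt hlt')
      exact hF5 j (Nat.lt_of_le_of_lt hj2 (Nat.lt_of_le_of_ne hi hiL)) hj3
  have hpar : ∀ i ≤ W.length, (i + m + vv i) % 2 = 0 := by
    intro i hi
    obtain ⟨w', hw'⟩ := walk_take W i hi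
    have h := walk_parity g w'
    rw [hw', hb0, ← hvv i] at h
    exact h
  have hparB : (W.length + m + M) % 2 = 0 := by
    have h := hpar W.length (le_refl _)
    rw [hvvl] at h
    exact h
  have hMldB : M ≤ m + W.length := by
    have h := (walk_val_le g W).1
    rw [hb0, hb1] at h
    exact h
  -- reduce to W.length ≤ wA.length
  have hdd : W.length ≤ wA.length := by
    rcases hd with h2 | h
    · by_contra hgt
      have hgt' := not_le.mp hgt
      rcases Nat.eq_or_lt_of_le hmM with hc | hmlt
      · have h0 := hminB bm bm Walk.nil hbm (hbm.trans hc)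
        simp only [Walk.length_nil] at h0
        exact arith_case0 _ _ hgt' h0
      · have hLB := arith_LB wA.length W.length m M hMA hparA hparB hgt' hmlt
        have h1le : 1 ≤ W.length := le_of_lt (lt_trans Nat.one_lt_two hLB)
        have h1lt : 1 < W.length := lt_trans Nat.one_lt_two hLB
        have h61 := hF6 1 h1le
        have h62 := hF6 2 (le_of_lt hLB)
        have h41 := hF4 1 Nat.one_pos h1le
        have h42 := hF4 2 Nat.zero_lt_two (le_of_lt hLB)
        have h51 := hF5 1 h1lt
        have h52 := hF5 2 hLB
        have hs1 := hstep 1 h1lt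
        have h21 : (1:ℕ) + 1 = 2 := rfl
        rw [h21] at hs1
        exact arith_case12 (vv 1) (vv 2) m M h2 hmlt h61.1 h61.2 h62.1 h62.2 h41 h42
          h51 h52 hs1
    · exact h
  -- distance functions on A
  have hδex : ∀ a : VA, ∃ d : ℕ,
      (∃ x, ∃ w : A.Walk x a, (f x).val = m ∧ w.length = d) ∧
      (∀ x (w : A.Walk x a), (f x).val = m → d ≤ w.length) := by
    intro a
    have hne : {n | ∃ x, ∃ w : A.Walk x a, (f x).val = m ∧ w.length = n}.Nonempty :=
      ⟨_, am, (hA.preconnected am a).some, ham, rfl⟩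
    exact ⟨sInf {n | ∃ x, ∃ w : A.Walk x a, (f x).val = m ∧ w.length = n},
      Nat.sInf_mem hne, fun x w hx => Nat.sInf_le ⟨x, w, hx, rfl⟩⟩
  choose δ hδmem hδmin using hδex
  have hεex : ∀ a : VA, ∃ d : ℕ,
      (∃ y, ∃ w : A.Walk a y, (f y).val = M ∧ w.length = d) ∧
      (∀ y (w : A.Walk a y), (f y).val = M → d ≤ w.length) := by
    intro a
    have hne : {n | ∃ y, ∃ w : A.Walk a y, (f y).val = M ∧ w.length = n}.Nonempty :=
      ⟨_, aM, (hA.preconnected a aM).some, haM, rfl⟩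
    exact ⟨sInf {n | ∃ y, ∃ w : A.Walk a y, (f y).val = M ∧ w.length = n},
      Nat.sInf_mem hne, fun y w hy => Nat.sInf_le ⟨y, w, hy, rfl⟩⟩
  choose ε hεmem hεmin using hεex
  have hδ0 : ∀ a, (f a).val = m → δ a = 0 := by
    intro a h
    have h' := hδmin a a Walk.nil h
    simp only [Walk.length_nil] at h'
    exact Nat.le_zero.mp h'
  have hε0 : ∀ a, (f a).val = M → ε a = 0 := by
    intro a h
    have h' := hεmin a a Walk.nil h
    simp only [Walk.length_nil] at h'
    exact Nat.le_zero.mp h'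
  have hδ0' : ∀ a, δ a = 0 → (f a).val = m := by
    intro a h
    obtain ⟨x, w, hx, hw⟩ := hδmem a
    rw [h] at hw
    have := Walk.eq_of_length_eq_zero hw
    subst this
    exact hx
  have hε0' : ∀ a, ε a = 0 → (f a).val = M := by
    intro a h
    obtain ⟨y, w, hy, hw⟩ := hεmem a
    rw [h] at hw
    have := Walk.eq_of_length_eq_zero hw
    subst this
    exact hy
  have hδpar : ∀ a, (δ a + m + (f a).val) % 2 = 0 := by
    intro a
    obtain ⟨x, w, hx, hw⟩ := hδmem a
    have h := walk_parity f w
    rw [hx, hw] at h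
    exact h
  have hεpar : ∀ a, (ε a + (f a).val + M) % 2 = 0 := by
    intro a
    obtain ⟨y, w, hy, hw⟩ := hεmem a
    have h := walk_parity f w
    rw [hy, hw] at h
    exact h
  have hδlip : ∀ a a', A.Adj a a' → δ a' ≤ δ a + 1 := by
    intro a a' hadj
    obtain ⟨x, w, hx, hw⟩ := hδmem a
    have h := hδmin a' x (w.concat hadj) hx
    rw [Walk.length_concat, hw] at h
    exact h
  have hεlip : ∀ a a', A.Adj a a' → ε a' ≤ ε a + 1 := by
    intro a a' hadj
    obtain ⟨y, w, hy, hw⟩ := hεmem a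
    have h := hεmin a' y (w.cons hadj.symm) hy
    rw [Walk.length_cons, hw] at h
    exact h
  have hδdA : ∀ a, (f a).val = M → W.length ≤ δ a := by
    intro a h
    obtain ⟨x, w, hx, hw⟩ := hδmem a
    have h' := hminA x a w hx h
    rw [hw] at h'
    exact le_trans hdd h'
  clear hδmem hεmem hδmin hεmin hminA hminB ham haM hbm hbM hb0 hb1 ha0 ha1 hMA hparA
  clear hstep hmM hdd
  -- the folding index
  have hμex : ∀ a : VA, ∃ j : ℕ, (j : ℤ) =
      min ((δ a : ℤ)) (max ((W.length : ℤ) - (ε a : ℤ)) (((f a).val : ℤ) - (m : ℤ))) := by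
    intro a
    refine ⟨(min ((δ a : ℤ)) (max ((W.length : ℤ) - (ε a : ℤ))
      (((f a).val : ℤ) - (m : ℤ)))).toNat, Int.toNat_of_nonneg ?_⟩
    exact le_min (Int.natCast_nonneg _)
      (le_trans (sub_nonneg.mpr (by exact_mod_cast (hrange a).1)) (le_max_right _ _))
  choose μ hμa using hμex
  have hE2 : ∀ a, μ a ≤ W.length ∧ vv (μ a) = (f a).val := by
    intro a
    have hj := hμa a
    by_cases h1 : (f a).val = m
    · have hμ0 : μ a = 0 := arith_zero (δ a) (ε a) ((f a).val) m W.length (μ a)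
        hj (hδ0 a h1) h1
      refine ⟨hμ0 ▸ Nat.zero_le _, ?_⟩
      rw [hμ0, hvv0]
      exact h1.symm
    · by_cases h2 : (f a).val = M
      · have hμl : μ a = W.length := arith_top (δ a) (ε a) ((f a).val) m M W.length (μ a)
          hj (hε0 a h2) (hδdA a h2) h2 hMldB (hrange a).1
        refine ⟨le_of_eq hμl, ?_⟩
        rw [hμl, hvvl]
        exact h2.symm
      · have hm : m < (f a).val := Nat.lt_of_le_of_ne (hrange a).1 (fun h => h1 h.symm)
        have hM : (f a).val < M := Nat.lt_of_le_of_ne (hrange a).2 h2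
        have hbnd := arith_mid W.length (δ a) (ε a) ((f a).val) m M (μ a) hj
          (fun h => h1 (hδ0' a h)) (fun h => h2 (hε0' a h))
          (hδpar a) (hεpar a) hparB hMldB hm hM
        have h6 := hF6 (μ a) (le_of_lt hbnd.2.1)
        have h4 := hF4 (μ a) hbnd.1 (le_of_lt hbnd.2.1)
        have h5 := hF5 (μ a) hbnd.2.1
        have hp := hpar (μ a) (le_of_lt hbnd.2.1)
        exact ⟨le_of_lt hbnd.2.1,
          arith_val (μ a) m M (vv (μ a)) ((f a).val) h6.1 h6.2 h4 h5 hp hbnd.2.2 hm hM hM3⟩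
  have hE1 : ∀ a a', A.Adj a a' → B.Adj (W.getVert (μ a)) (W.getVert (μ a')) := by
    intro a a' hadj
    have hf := f.map_adj hadj
    rw [pathGraph_adj] at hf
    have hstepμ : μ a' = μ a + 1 ∨ μ a = μ a' + 1 :=
      arith_step W.length (δ a) (ε a) ((f a).val) (δ a') (ε a') ((f a').val) m M
        (μ a) (μ a') (hμa a) (hμa a')
        (hδlip a a' hadj) (hδlip a' a hadj.symm) (hεlip a a' hadj) (hεlip a' a hadj.symm)
        (hδpar a) (hδpar a') (hεpar a) (hεpar a') hparB hf
    have hb1' := (hE2 a).1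
    have hb2' := (hE2 a').1
    rcases hstepμ with h | h
    · rw [h] at hb2'
      have h' := W.adj_getVert_succ (i := μ a) (Nat.lt_of_succ_le hb2')
      rwa [← h] at h'
    · rw [h] at hb1'
      have h' := W.adj_getVert_succ (i := μ a') (Nat.lt_of_succ_le hb1')
      rw [← h] at h'
      exact h'.symm
  refine ⟨⟨fun a => W.getVert (μ a), fun {a a'} hadj => hE1 a a' hadj⟩, fun x => ?_⟩
  have hx := (hE2 x).2
  rw [hvv] at hx
  exact Fin.val_injective hx
/-- Let `A` and `B` be connected simple graphs with graph homomorphisms `f : A → P₃` and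
`g : B → P₃` (where `P₃ = pathGraph 4` is the path with 3 edges and 4 vertices) such that
the vertex image of `f` is contained in the vertex image of `g`. Then there is a morphism
`(A,f) → (B,g)` or a morphism `(B,g) → (A,f)` in the slice category `Gra/P₃`: either a graph
homomorphism `ψ : A → B` with `g ∘ ψ = f`, or a graph homomorphism `ψ : B → A` with
`f ∘ ψ = g`. -/
theorem stmt4 {VA VB : Type*} (A : SimpleGraph VA) (B : SimpleGraph VB)
    (hA : A.Connected) (hB : B.Connected)
    (f : A →g pathGraph 4) (g : B →g pathGraph 4)
    (himg : Set.range ⇑f ⊆ Set.range ⇑g) :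
    (∃ ψ : A →g B, ∀ x, g (ψ x) = f x) ∨ (∃ ψ : B →g A, ∀ x, f (ψ x) = g x) := by
  classical
  obtain ⟨a₀⟩ := hA.nonempty
  have hSne : {n | ∃ a : VA, (f a).val = n}.Nonempty := ⟨(f a₀).val, a₀, rfl⟩
  have hSbdd : BddAbove {n | ∃ a : VA, (f a).val = n} := by
    refine ⟨3, fun n hn => ?_⟩
    obtain ⟨a, ha⟩ := hn
    exact ha ▸ (f a).is_le
  obtain ⟨am, ham⟩ := Nat.sInf_mem hSne
  obtain ⟨aM, haM⟩ := Nat.sSup_mem hSne hSbdd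
  have hrange : ∀ a, sInf {n | ∃ a : VA, (f a).val = n} ≤ (f a).val ∧
      (f a).val ≤ sSup {n | ∃ a : VA, (f a).val = n} :=
    fun a => ⟨Nat.sInf_le ⟨a, rfl⟩, le_csSup hSbdd ⟨a, rfl⟩⟩
  obtain ⟨bm, hbm⟩ := himg (Set.mem_range_self am)
  obtain ⟨bM, hbM⟩ := himg (Set.mem_range_self aM)
  have hbm' : (g bm).val = sInf {n | ∃ a : VA, (f a).val = n} :=
    (congrArg Fin.val hbm).trans ham
  have hbM' : (g bM).val = sSup {n | ∃ a : VA, (f a).val = n} :=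
    (congrArg Fin.val hbM).trans haM
  by_cases hsmall : sSup {n | ∃ a : VA, (f a).val = n} ≤
      sInf {n | ∃ a : VA, (f a).val = n} + 2
  · exact Or.inl (key hA hB f g _ _ ⟨am, ham⟩ ⟨aM, haM⟩ ⟨bm, hbm'⟩ ⟨bM, hbM'⟩ hrange
      (Or.inl hsmall))
  · have hM3 : sSup {n | ∃ a : VA, (f a).val = n} ≤ 3 := haM ▸ (f aM).is_le
    have hm0 : sInf {n | ∃ a : VA, (f a).val = n} = 0 ∧
        sSup {n | ∃ a : VA, (f a).val = n} = 3 := by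
      have h1 := (hrange aM).1
      omega
    rcases le_total
      (sInf {n | ∃ b b', ∃ w : B.Walk b b', (g b).val = sInf {n | ∃ a : VA, (f a).val = n} ∧
        (g b').val = sSup {n | ∃ a : VA, (f a).val = n} ∧ w.length = n})
      (sInf {n | ∃ a a', ∃ w : A.Walk a a', (f a).val = sInf {n | ∃ a : VA, (f a).val = n} ∧
        (f a').val = sSup {n | ∃ a : VA, (f a).val = n} ∧ w.length = n}) with hcmp | hcmp
    · exact Or.inl (key hA hB f g _ _ ⟨am, ham⟩ ⟨aM, haM⟩ ⟨bm, hbm'⟩ ⟨bM, hbM'⟩ hrange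
        (Or.inr hcmp))
    · refine Or.inr (key hB hA g f _ _ ⟨bm, hbm'⟩ ⟨bM, hbM'⟩ ⟨am, ham⟩ ⟨aM, haM⟩
        (fun b => ⟨?_, ?_⟩) (Or.inr hcmp))
      · rw [hm0.1]; exact Nat.zero_le _
      · rw [hm0.2]; exact (g b).is_le
end

section
/- Let H and G be simple graphs, a ≠ b two vertices of H, and f : H → G a graph homomorphism with f(a) = f(b). Then for every digraph D, the map f_D : D ⋆ H → G (sending every vertex x ∈ D to f(a) and every vertex (u,v,y) to f(y)) is a graph homomorphism, so (D ⋆ H, f_D) is an object of the slice category Gra/G. -/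
open SimpleGraph

attribute [local instance] Classical.propDecidable

/-- The vertex set of the arrow construction `D ⋆ H`: the disjoint union of `D` and
`E(D) × (V(H) ∖ {a, b})`, where `E(D)` is the set of edges of the digraph `(D, E)` and
`a`, `b` are the two distinguished vertices of `H`. -/
def starVert (V : Type*) (a b : V) (D : Type*) (E : D → D → Prop) : Type _ :=
  D ⊕ ({p : D × D // E p.1 p.2} × {x : V // x ≠ a ∧ x ≠ b})

/-- For an edge `(u, v)` of the digraph `(D, E)`, the map
`φ_{(u,v)} : V(H) → V(D ⋆ H)` sending `a ↦ u`, `b ↦ v`, and `x ↦ (u, v, x)` otherwise. -/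
noncomputable def starPhi {V : Type*} (a b : V) {D : Type*} {E : D → D → Prop}
    (u v : D) (huv : E u v) (x : V) : starVert V a b D E :=
  if hx : x = a then Sum.inl u
  else if hx' : x = b then Sum.inl v
  else Sum.inr (⟨(u, v), huv⟩, ⟨x, hx, hx'⟩)

/-- The arrow construction `D ⋆ H` for a simple graph `H` with distinguished vertices
`a`, `b` and a digraph `(D, E)`: the edges are exactly the pairs
`(φ_{(u,v)} s, φ_{(u,v)} t)` for `(u, v) ∈ E(D)` and `(s, t) ∈ E(H)`. -/
noncomputable def starGraph {V : Type*} (H : SimpleGraph V) (a b : V)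
    (D : Type*) (E : D → D → Prop) : SimpleGraph (starVert V a b D E) :=
  SimpleGraph.fromRel (fun x y => ∃ (u v : D) (huv : E u v) (s t : V),
    H.Adj s t ∧ starPhi a b u v huv s = x ∧ starPhi a b u v huv t = y)

/-- Given a vertex map `f : V(H) → V(G)` (intended to satisfy `f a = f b`), the map
`f_D : V(D ⋆ H) → V(G)` sending every vertex of `D` to `f a` and `(u, v, y) ↦ f y`. -/
def starMap {V W : Type*} (f : V → W) (a b : V) {D : Type*} {E : D → D → Prop} :
    starVert V a b D E → W :=
  Sum.elim (fun _ => f a) (fun p => f p.2.val)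

/-- Given a digraph homomorphism `h : (D₁, E₁) → (D₂, E₂)`, the map
`h ⋆ H : V(D₁ ⋆ H) → V(D₂ ⋆ H)` sending `x ↦ h x` for `x ∈ D₁` and
`(u, v, w) ↦ (h u, h v, w)`. -/
def starMapHom {V : Type*} (a b : V) {D₁ D₂ : Type*}
    {E₁ : D₁ → D₁ → Prop} {E₂ : D₂ → D₂ → Prop}
    (h : D₁ → D₂) (hh : ∀ u v, E₁ u v → E₂ (h u) (h v)) :
    starVert V a b D₁ E₁ → starVert V a b D₂ E₂ :=
  Sum.elim (fun x => Sum.inl (h x))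
    (fun p => Sum.inr (⟨(h p.1.val.1, h p.1.val.2), hh _ _ p.1.prop⟩, p.2))

theorem starMap_starPhi {V W : Type*} (f : V → W) {a b : V} (hf : f a = f b)
    {D : Type*} {E : D → D → Prop} (u v : D) (huv : E u v) (s : V) :
    starMap f a b (starPhi a b u v huv s) = f s := by
  -- `split_ifs` cannot see through `starVert`, so each branch of `starPhi` is evaluated by hand.
  by_cases hsa : s = a
  · rw [show starPhi a b u v huv s = Sum.inl u from dif_pos hsa, hsa]
    rfl
  by_cases hsb : s = b
  · rw [show starPhi a b u v huv s = Sum.inl v from (dif_neg hsa).trans (dif_pos hsb), hsb]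
    exact hf
  · rw [show starPhi a b u v huv s = Sum.inr (⟨(u, v), huv⟩, ⟨s, hsa, hsb⟩) from
      (dif_neg hsa).trans (dif_neg hsb)]
    rfl

theorem starGraph_adj_exists_starPhi {V : Type*} {H : SimpleGraph V} {a b : V}
    {D : Type*} {E : D → D → Prop} {x y : starVert V a b D E}
    (hxy : (starGraph H a b D E).Adj x y) :
    ∃ (u v : D) (huv : E u v) (s t : V),
      H.Adj s t ∧ starPhi a b u v huv s = x ∧ starPhi a b u v huv t = y := by
  obtain ⟨-, h | ⟨u, v, huv, s, t, hst, hs, ht⟩⟩ := (fromRel_adj _ _ _).mp hxy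
  · exact h
  · exact ⟨u, v, huv, t, s, hst.symm, ht, hs⟩

theorem stmt5_general {V W : Type*} (H : SimpleGraph V) (G : SimpleGraph W)
    (a b : V) (f : H →g G) (hf : f a = f b)
    (D : Type*) (E : D → D → Prop) :
    ∀ x y : starVert V a b D E, (starGraph H a b D E).Adj x y →
      G.Adj (starMap (⇑f) a b x) (starMap (⇑f) a b y) := by
  intro x y hxy
  obtain ⟨u, v, huv, s, t, hst, rfl, rfl⟩ := starGraph_adj_exists_starPhi hxy
  rw [starMap_starPhi f hf, starMap_starPhi f hf]
  exact f.map_adj hst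

/-- Let `H` and `G` be simple graphs, `a ≠ b` two vertices of `H`, and `f : H → G` a graph
homomorphism with `f a = f b`. Then for every digraph `(D, E)` the map
`f_D : D ⋆ H → G` is a graph homomorphism, so `(D ⋆ H, f_D)` is an object of the slice
category `Gra/G`. -/
theorem stmt5 {V W : Type*} (H : SimpleGraph V) (G : SimpleGraph W)
    (a b : V) (hab : a ≠ b) (f : H →g G) (hf : f a = f b)
    (D : Type*) (E : D → D → Prop) :
    ∀ x y : starVert V a b D E, (starGraph H a b D E).Adj x y →
      G.Adj (starMap (⇑f) a b x) (starMap (⇑f) a b y) :=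
  stmt5_general H G a b f hf D E
end

section
/- Let H and G be simple graphs, a ≠ b two vertices of H, and f : H → G a graph homomorphism with f(a) = f(b). For every digraph homomorphism h : D₁ → D₂, the map h ⋆ H : D₁ ⋆ H → D₂ ⋆ H is a graph homomorphism and satisfies f_{D₁} = f_{D₂} ∘ (h ⋆ H); hence h ⋆ H is a morphism (D₁ ⋆ H, f_{D₁}) → (D₂ ⋆ H, f_{D₂}) in the slice category Gra/G. -/
open SimpleGraph

attribute [local instance] Classical.propDecidable

/-! The only way `h ⋆ H` can fail to preserve edges is that `h` identifies the two ends `u, v` of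
an edge of `D₁`, so that the copy of `H` on `(u, v)` lands in a copy whose `a` and `b` coincide. An
edge of that copy of `H` then becomes a loop only if it is the edge `ab`, and `H` has no such edge
because `f` is a homomorphism with `f a = f b`. -/

section Star

variable {V : Type*} {H : SimpleGraph V} {a b : V} {D D₁ D₂ : Type*}
  {E : D → D → Prop} {E₁ : D₁ → D₁ → Prop} {E₂ : D₂ → D₂ → Prop}

lemma starPhi_of_eq_left (u v : D) (huv : E u v) {x : V} (hxa : x = a) :
    starPhi a b u v huv x = Sum.inl u :=
  dif_pos hxa

lemma starPhi_of_eq_right (u v : D) (huv : E u v) {x : V} (hxa : x ≠ a) (hxb : x = b) :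
    starPhi a b u v huv x = Sum.inl v :=
  (dif_neg hxa).trans (dif_pos hxb)

lemma starPhi_of_ne (u v : D) (huv : E u v) {x : V} (hxa : x ≠ a) (hxb : x ≠ b) :
    starPhi a b u v huv x = Sum.inr (⟨(u, v), huv⟩, ⟨x, hxa, hxb⟩) :=
  (dif_neg hxa).trans (dif_neg hxb)

lemma eq_of_starPhi_eq {u v : D} {huv : E u v} {s t : V} (hsa : s ≠ a) (hsb : s ≠ b)
    (hst : starPhi a b u v huv s = starPhi a b u v huv t) : s = t := by
  rw [starPhi_of_ne u v huv hsa hsb] at hst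
  by_cases hta : t = a
  · rw [starPhi_of_eq_left u v huv hta] at hst
    exact absurd hst Sum.inr_ne_inl
  by_cases htb : t = b
  · rw [starPhi_of_eq_right u v huv hta htb] at hst
    exact absurd hst Sum.inr_ne_inl
  · rw [starPhi_of_ne u v huv hta htb] at hst
    exact congrArg (fun p => p.2.val) (Sum.inr_injective hst)

lemma starPhi_ne_of_adj (hab : ¬H.Adj a b) (u v : D) (huv : E u v) {s t : V}
    (hst : H.Adj s t) : starPhi a b u v huv s ≠ starPhi a b u v huv t := by
  intro heq
  by_cases hs : s ≠ a ∧ s ≠ b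
  · exact hst.ne (eq_of_starPhi_eq hs.1 hs.2 heq)
  by_cases ht : t ≠ a ∧ t ≠ b
  · exact hst.ne (eq_of_starPhi_eq ht.1 ht.2 heq.symm).symm
  obtain ⟨rfl, rfl⟩ | ⟨rfl, rfl⟩ : s = a ∧ t = b ∨ s = b ∧ t = a := by grind [hst.ne]
  · exact hab hst
  · exact hab hst.symm

lemma starGraph_adj_starPhi (hab : ¬H.Adj a b) (u v : D) (huv : E u v) {s t : V}
    (hst : H.Adj s t) :
    (starGraph H a b D E).Adj (starPhi a b u v huv s) (starPhi a b u v huv t) :=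
  (fromRel_adj _ _ _).2
    ⟨starPhi_ne_of_adj hab u v huv hst, .inl ⟨u, v, huv, s, t, hst, rfl, rfl⟩⟩

lemma starMapHom_starPhi (h : D₁ → D₂) (hh : ∀ u v, E₁ u v → E₂ (h u) (h v))
    (u v : D₁) (huv : E₁ u v) (x : V) :
    starMapHom a b h hh (starPhi a b u v huv x) = starPhi a b (h u) (h v) (hh u v huv) x := by
  by_cases hxa : x = a
  · rw [starPhi_of_eq_left _ _ _ hxa, starPhi_of_eq_left _ _ _ hxa]
    rfl
  by_cases hxb : x = b
  · rw [starPhi_of_eq_right _ _ _ hxa hxb, starPhi_of_eq_right _ _ _ hxa hxb]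
    rfl
  · rw [starPhi_of_ne _ _ _ hxa hxb, starPhi_of_ne _ _ _ hxa hxb]
    rfl

lemma starMap_starMapHom {W : Type*} (f : V → W) (h : D₁ → D₂)
    (hh : ∀ u v, E₁ u v → E₂ (h u) (h v)) (x : starVert V a b D₁ E₁) :
    starMap f a b (starMapHom a b h hh x) = starMap f a b x := by
  cases x <;> rfl

variable (H) in
noncomputable def starHom (hab : ¬H.Adj a b) (h : D₁ → D₂)
    (hh : ∀ u v, E₁ u v → E₂ (h u) (h v)) : starGraph H a b D₁ E₁ →g starGraph H a b D₂ E₂ where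
  toFun := starMapHom a b h hh
  map_rel' {x y} hxy := by
    obtain ⟨-, ⟨u, v, huv, s, t, hst, rfl, rfl⟩ | ⟨u, v, huv, s, t, hst, rfl, rfl⟩⟩ :=
      (fromRel_adj _ _ _).1 hxy
    · rw [starMapHom_starPhi, starMapHom_starPhi]
      exact starGraph_adj_starPhi hab _ _ _ hst
    · rw [starMapHom_starPhi, starMapHom_starPhi]
      exact (starGraph_adj_starPhi hab _ _ _ hst).symm

end Star

theorem stmt7_general {V W : Type*} (H : SimpleGraph V) (G : SimpleGraph W)
    (a b : V) (f : H →g G) (hf : f a = f b)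
    {D₁ D₂ : Type*} (E₁ : D₁ → D₁ → Prop) (E₂ : D₂ → D₂ → Prop)
    (h : D₁ → D₂) (hh : ∀ u v, E₁ u v → E₂ (h u) (h v)) :
    (∀ x y : starVert V a b D₁ E₁, (starGraph H a b D₁ E₁).Adj x y →
      (starGraph H a b D₂ E₂).Adj (starMapHom a b h hh x) (starMapHom a b h hh y)) ∧
    (∀ x : starVert V a b D₁ E₁,
      starMap (⇑f) a b x = starMap (⇑f) a b (starMapHom a b h hh x)) := by
  have hab : ¬H.Adj a b := fun hadj => G.ne_of_adj (f.map_adj hadj) hf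
  exact ⟨fun _ _ => (starHom H hab h hh).map_adj,
    fun x => (starMap_starMapHom f h hh x).symm⟩

/-- Let `H` and `G` be simple graphs, `a ≠ b` two vertices of `H`, and `f : H → G` a graph
homomorphism with `f a = f b`. For every digraph homomorphism `h : (D₁, E₁) → (D₂, E₂)`, the
map `h ⋆ H : D₁ ⋆ H → D₂ ⋆ H` is a graph homomorphism and satisfies
`f_{D₁} = f_{D₂} ∘ (h ⋆ H)`; hence `h ⋆ H` is a morphism
`(D₁ ⋆ H, f_{D₁}) → (D₂ ⋆ H, f_{D₂})` in the slice category `Gra/G`. -/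
theorem stmt7 {V W : Type*} (H : SimpleGraph V) (G : SimpleGraph W)
    (a b : V) (hab : a ≠ b) (f : H →g G) (hf : f a = f b)
    {D₁ D₂ : Type*} (E₁ : D₁ → D₁ → Prop) (E₂ : D₂ → D₂ → Prop)
    (h : D₁ → D₂) (hh : ∀ u v, E₁ u v → E₂ (h u) (h v)) :
    (∀ x y : starVert V a b D₁ E₁, (starGraph H a b D₁ E₁).Adj x y →
      (starGraph H a b D₂ E₂).Adj (starMapHom a b h hh x) (starMapHom a b h hh y)) ∧
    (∀ x : starVert V a b D₁ E₁,
      starMap (⇑f) a b x = starMap (⇑f) a b (starMapHom a b h hh x)) :=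
  stmt7_general H G a b f hf E₁ E₂ h hh
end

section
/- Let C_4 be the 4-cycle with vertices {0,1,2,3} and edges 0–1, 1–2, 2–3, 3–0, let P_4 be the path with vertices {a,b,c,d,e} and edges a–b, b–c, c–d, d–e, and let f : P_4 → C_4 be the graph homomorphism with f(a)=0, f(b)=1, f(c)=2, f(d)=3, f(e)=0. Then for every digraph D without isolated points, every graph homomorphism χ : P_4 → D ⋆ (P_4, a, e) satisfying f_D ∘ χ = f is equal to φ_{(u,v)} for some edge (u,v) ∈ E(D). -/
open SimpleGraph

attribute [local instance] Classical.propDecidable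

/-
Write `f = ![0,1,2,3,0]`. The inner vertices `1, 2, 3` of `P₄` are the only vertices with
`f`-values `1, 2, 3`, while `f_D` sends every vertex of `D` to `0`; so `f_D ∘ χ = f` forces
`χ i = (eᵢ, i)` for `i = 1, 2, 3` and `χ 0, χ 4 ∈ D`. Two adjacent inner vertices of `D ⋆ H`
lie in the same copy of `H`, so `e₁ = e₂ = e₃ =: (u, v)`, and a vertex of `D` adjacent to
`(u, v, x)` is `u` (if `a ~ x`) or `v` (if `b ~ x`); since `1 ≁ 4` and `3 ≁ 0` this gives
`χ 0 = u` and `χ 4 = v`.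
-/

namespace StarGraph

variable {V : Type*} {a b : V} {D : Type*} {E : D → D → Prop}

theorem starPhi_left (u v : D) (huv : E u v) : starPhi a b u v huv a = .inl u :=
  dif_pos rfl

theorem starPhi_right (hab : a ≠ b) (u v : D) (huv : E u v) :
    starPhi a b u v huv b = .inl v :=
  (dif_neg hab.symm).trans (dif_pos rfl)

theorem starPhi_of_ne (u v : D) (huv : E u v) (x : {x : V // x ≠ a ∧ x ≠ b}) :
    starPhi a b u v huv x = .inr (⟨(u, v), huv⟩, x) :=
  (dif_neg x.2.1).trans (dif_neg x.2.2)

theorem starPhi_eq_inr {u v : D} {huv : E u v} {s : V} {e : {p : D × D // E p.1 p.2}}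
    {x : {x : V // x ≠ a ∧ x ≠ b}} (h : starPhi a b u v huv s = .inr (e, x)) :
    ⟨(u, v), huv⟩ = e ∧ s = x := by
  unfold starPhi starVert at h
  split_ifs at h
  obtain ⟨rfl, rfl⟩ := Prod.mk.inj (Sum.inr.inj h)
  exact ⟨rfl, rfl⟩

theorem starPhi_eq_inl {u v : D} {huv : E u v} {s : V} {d : D}
    (h : starPhi a b u v huv s = .inl d) : (s = a ∧ d = u) ∨ (s = b ∧ d = v) := by
  unfold starPhi starVert at h
  split_ifs at h with ha hb
  · exact .inl ⟨ha, (Sum.inl.inj h).symm⟩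
  · exact .inr ⟨hb, (Sum.inl.inj h).symm⟩

variable {H : SimpleGraph V}

theorem exists_of_starGraph_adj {x y : starVert V a b D E} (h : (starGraph H a b D E).Adj x y) :
    ∃ (u v : D) (huv : E u v) (s t : V), H.Adj s t ∧
      starPhi a b u v huv s = x ∧ starPhi a b u v huv t = y := by
  obtain ⟨-, h | ⟨u, v, huv, s, t, hst, hs, ht⟩⟩ := (fromRel_adj _ _ _).mp h
  · exact h
  · exact ⟨u, v, huv, t, s, hst.symm, ht, hs⟩

theorem starGraph_adj_inr_inr {e e' : {p : D × D // E p.1 p.2}} {x y : {x : V // x ≠ a ∧ x ≠ b}}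
    (h : (starGraph H a b D E).Adj (.inr (e, x)) (.inr (e', y))) : e = e' := by
  obtain ⟨u, v, huv, s, t, -, hs, ht⟩ := exists_of_starGraph_adj h
  exact (starPhi_eq_inr hs).1.symm.trans (starPhi_eq_inr ht).1

theorem starGraph_adj_inl_inr {d : D} {e : {p : D × D // E p.1 p.2}}
    {x : {x : V // x ≠ a ∧ x ≠ b}} (h : (starGraph H a b D E).Adj (.inl d) (.inr (e, x))) :
    (d = e.1.1 ∧ H.Adj a x) ∨ (d = e.1.2 ∧ H.Adj b x) := by
  obtain ⟨u, v, huv, s, t, hst, hs, ht⟩ := exists_of_starGraph_adj h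
  obtain ⟨rfl, rfl⟩ := starPhi_eq_inr ht
  rcases starPhi_eq_inl hs with ⟨rfl, rfl⟩ | ⟨rfl, rfl⟩
  · exact .inl ⟨rfl, hst⟩
  · exact .inr ⟨rfl, hst⟩

theorem eq_fst_of_starGraph_adj {d : D} {e : {p : D × D // E p.1 p.2}}
    {x : {x : V // x ≠ a ∧ x ≠ b}} (h : (starGraph H a b D E).Adj (.inl d) (.inr (e, x)))
    (hbx : ¬H.Adj b x) : d = e.1.1 :=
  ((starGraph_adj_inl_inr h).resolve_right fun h' => hbx h'.2).1

theorem eq_snd_of_starGraph_adj {d : D} {e : {p : D × D // E p.1 p.2}}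
    {x : {x : V // x ≠ a ∧ x ≠ b}} (h : (starGraph H a b D E).Adj (.inl d) (.inr (e, x)))
    (hax : ¬H.Adj a x) : d = e.1.2 :=
  ((starGraph_adj_inl_inr h).resolve_left fun h' => hax h'.2).1

theorem eq_starPhi_of_forall {χ : V → starVert V a b D E} (e : {p : D × D // E p.1 p.2})
    (ha : χ a = .inl e.1.1) (hb : χ b = .inl e.1.2)
    (hx : ∀ x : {x : V // x ≠ a ∧ x ≠ b}, χ x = .inr (e, x)) (s : V) :
    χ s = starPhi a b e.1.1 e.1.2 e.2 s := by
  by_cases hsa : s = a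
  · rw [hsa, ha, starPhi_left]
  by_cases hsb : s = b
  · rw [hsb, hb, starPhi_right (hsb ▸ Ne.symm hsa)]
  · exact (hx ⟨s, hsa, hsb⟩).trans (starPhi_of_ne _ _ _ ⟨s, hsa, hsb⟩).symm

variable {W : Type*} {f : V → W}

theorem exists_eq_inl_of_starMap_eq (hf : ∀ x : {x : V // x ≠ a ∧ x ≠ b}, f x ≠ f a)
    {z : starVert V a b D E} (h : starMap f a b z = f a) : ∃ d, z = .inl d := by
  rcases z with d | ⟨e, x⟩
  · exact ⟨d, rfl⟩
  · exact absurd h (hf x)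

theorem exists_eq_inr_of_starMap_eq {x : {x : V // x ≠ a ∧ x ≠ b}} (hxa : f x ≠ f a)
    (hx : ∀ y : {x : V // x ≠ a ∧ x ≠ b}, f y = f x → y = x)
    {z : starVert V a b D E} (h : starMap f a b z = f x) : ∃ e, z = .inr (e, x) := by
  rcases z with d | ⟨e, y⟩
  · exact absurd h.symm hxa
  · exact ⟨e, by rw [hx y h]⟩

end StarGraph

open StarGraph

theorem stmt11_general (D : Type*) (E : D → D → Prop)
    (χ : pathGraph 5 →g starGraph (pathGraph 5) (0 : Fin 5) 4 D E)
    (hχ : ∀ x : Fin 5,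
      starMap (![0, 1, 2, 3, 0] : Fin 5 → Fin 4) 0 4 (χ x) = ![0, 1, 2, 3, 0] x) :
    ∃ (u v : D) (huv : E u v), ∀ x : Fin 5, χ x = starPhi 0 4 u v huv x := by
  have inner (x : {x : Fin 5 // x ≠ 0 ∧ x ≠ 4}) : ∃ e, χ x = .inr (e, x) :=
    exists_eq_inr_of_starMap_eq (by revert x; decide) (by revert x; decide) (hχ x)
  obtain ⟨e, h1⟩ := inner ⟨1, by decide⟩
  obtain ⟨e₂, h2⟩ := inner ⟨2, by decide⟩
  obtain ⟨e₃, h3⟩ := inner ⟨3, by decide⟩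
  obtain ⟨d₀, h0⟩ := exists_eq_inl_of_starMap_eq (by decide) (hχ 0)
  obtain ⟨d₄, h4⟩ := exists_eq_inl_of_starMap_eq (by decide) (hχ 4)
  have adj (i j : Fin 5) (hij : i.val + 1 = j.val := by decide) : (pathGraph 5).Adj i j :=
    pathGraph_adj.mpr (.inl hij)
  obtain rfl : e = e₂ := starGraph_adj_inr_inr (h1 ▸ h2 ▸ χ.map_adj (adj 1 2))
  obtain rfl : e = e₃ := starGraph_adj_inr_inr (h2 ▸ h3 ▸ χ.map_adj (adj 2 3))
  have hd₀ : d₀ = e.1.1 :=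
    eq_fst_of_starGraph_adj (h0 ▸ h1 ▸ χ.map_adj (adj 0 1)) (by simp [pathGraph_adj])
  have hd₄ : d₄ = e.1.2 :=
    eq_snd_of_starGraph_adj (h4 ▸ h3 ▸ (χ.map_adj (adj 3 4)).symm) (by simp [pathGraph_adj])
  refine ⟨e.1.1, e.1.2, e.2, eq_starPhi_of_forall e (hd₀ ▸ h0) (hd₄ ▸ h4) ?_⟩
  rintro ⟨x, hx0, hx4⟩
  fin_cases x
  exacts [absurd rfl hx0, h1, h2, h3, absurd rfl hx4]

/-- Let `C₄` be the 4-cycle with vertices `{0,1,2,3}` and edges `0–1, 1–2, 2–3, 3–0`,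
`P₄ = pathGraph 5` the path with vertices `a,b,c,d,e = 0,1,2,3,4` and edges
`a–b, b–c, c–d, d–e`, and `f : P₄ → C₄` the graph homomorphism `f = ![0,1,2,3,0]`
(so `f a = 0, f b = 1, f c = 2, f d = 3, f e = 0`). Then for every digraph `(D, E)` without
isolated points, every graph homomorphism `χ : P₄ → D ⋆ (P₄, a, e)` with `f_D ∘ χ = f`
equals `φ_{(u,v)}` for some edge `(u, v) ∈ E(D)`. -/
theorem stmt11 (D : Type*) (E : D → D → Prop)
    (hD : ∀ d : D, ∃ d', E d d' ∨ E d' d)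
    (χ : pathGraph 5 →g starGraph (pathGraph 5) (0 : Fin 5) 4 D E)
    (hχ : ∀ x : Fin 5,
      starMap (![0, 1, 2, 3, 0] : Fin 5 → Fin 4) 0 4 (χ x) = ![0, 1, 2, 3, 0] x) :
    ∃ (u v : D) (huv : E u v), ∀ x : Fin 5, χ x = starPhi 0 4 u v huv x :=
  stmt11_general D E χ hχ
end

section
/- Fix n ∈ {0,1,2}. Let H be a connected simple graph and f : H → P_n a surjective graph homomorphism (surjective on vertices). Then H contains a connected subgraph A such that the restriction of f to A is a graph isomorphism onto P_n, and there exists a graph homomorphism φ : H → A with f ∘ φ = f (so (H,f) homomorphically maps onto (A, f restricted to A) in the slice category Gra/P_n). -/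
/-!
If `g : Pₙ →g H` is a section of `f` (that is, `f ∘ g = id`), then `f` restricts to an
isomorphism from the induced subgraph on the image `A` of `g` onto `Pₙ`, and `g ∘ f : H → A` is a
morphism over `Pₙ`. So it suffices to lift `Pₙ` through `f`. For `n ≤ 2` a connected `H` always
admits such a lift: for `n = 2`, follow a walk from `f⁻¹(0)` to `f⁻¹(2)`; the vertex preceding
the first visit to level `2` lies at level `1` and was entered from level `0`.
-/

open SimpleGraph

namespace SimpleGraph

section Retract

variable {V W : Type*} {H : SimpleGraph V} {G : SimpleGraph W} {f : H →g G} {g : G →g H}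

def isoInduceRangeOfLeftInverse (hfg : Function.LeftInverse f g) :
    H.induce (Set.range g) ≃g G where
  toFun x := f x
  invFun y := ⟨g y, y, rfl⟩
  left_inv := by
    rintro ⟨_, y, rfl⟩
    simp [hfg y]
  right_inv := hfg
  map_rel_iff' := by
    rintro ⟨_, a, rfl⟩ ⟨_, b, rfl⟩
    refine ⟨fun h => g.map_adj ?_, f.map_adj⟩
    simpa [hfg a, hfg b] using h

def retractionToRange (f : H →g G) (g : G →g H) : H →g H.induce (Set.range g) where
  toFun x := ⟨g (f x), f x, rfl⟩
  map_rel' h := g.map_adj (f.map_adj h)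

end Retract

def pathGraphHomOfAdj {V : Type*} {H : SimpleGraph V} {n : ℕ} (g : Fin (n + 1) → V)
    (hg : ∀ i : Fin n, H.Adj (g i.castSucc) (g i.succ)) : pathGraph (n + 1) →g H where
  toFun := g
  map_rel' {a b} h := by
    rcases pathGraph_adj.mp h with h | h
    · convert hg ⟨a, by omega⟩ using 2 <;> ext <;> simp [h]
    · convert (hg ⟨b, by omega⟩).symm using 2 <;> ext <;> simp [h]

variable {V : Type*} {H : SimpleGraph V}

lemma exists_leftInverse_of_pathGraph_one (f : H →g pathGraph 1) (hsurj : Function.Surjective f) :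
    ∃ g : pathGraph 1 →g H, Function.LeftInverse f g := by
  obtain ⟨b, -⟩ := hsurj 0
  exact ⟨pathGraphHomOfAdj (fun _ => b) Fin.elim0, fun _ => Subsingleton.elim _ _⟩

lemma exists_leftInverse_of_pathGraph_two (hconn : H.Connected) (f : H →g pathGraph 2)
    (hsurj : Function.Surjective f) : ∃ g : pathGraph 2 →g H, Function.LeftInverse f g := by
  obtain ⟨b, hb⟩ := hsurj 0
  obtain ⟨c, hc⟩ := hsurj 1
  obtain ⟨p⟩ := hconn b c
  cases p with
  | nil => exact absurd (hb.symm.trans hc) (by decide)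
  | @cons _ x _ hbx _ =>
    have hx : f x = 1 := by
      have hne : (0 : Fin 2) ≠ f x := by simpa [pathGraph_two_eq_top, hb] using f.map_adj hbx
      omega
    exact ⟨pathGraphHomOfAdj ![b, x] (Fin.forall_fin_one.2 hbx), Fin.forall_fin_two.2 ⟨hb, hx⟩⟩

lemma pathGraph_three_adj_zero {j : Fin 3} (h : (pathGraph 3).Adj 0 j) : j = 1 := by
  fin_cases j <;> simp_all [pathGraph_adj]

lemma pathGraph_three_adj_one {j : Fin 3} (h : (pathGraph 3).Adj 1 j) : j = 0 ∨ j = 2 := by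
  fin_cases j <;> simp_all [pathGraph_adj]

lemma exists_adj_adj_of_walk (f : H →g pathGraph 3) {x y : V} (p : H.Walk x y) (hy : f y = 2)
    (hx : f x = 0 ∨ f x = 1 ∧ ∃ u, H.Adj u x ∧ f u = 0) :
    ∃ u v w, H.Adj u v ∧ H.Adj v w ∧ f u = 0 ∧ f v = 1 ∧ f w = 2 := by
  induction p with
  | nil => rcases hx with h | ⟨h, -⟩ <;> simp [h] at hy
  | @cons x m y hxm q ih =>
    have hfxm := f.map_adj hxm
    rcases hx with hx0 | ⟨hx1, u, hux, hu0⟩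
    · rw [hx0] at hfxm
      exact ih hy (Or.inr ⟨pathGraph_three_adj_zero hfxm, x, hxm, hx0⟩)
    · rw [hx1] at hfxm
      rcases pathGraph_three_adj_one hfxm with hm0 | hm2
      · exact ih hy (Or.inl hm0)
      · exact ⟨u, x, m, hux, hxm, hu0, hx1, hm2⟩

lemma exists_leftInverse_of_pathGraph_three (hconn : H.Connected) (f : H →g pathGraph 3)
    (hsurj : Function.Surjective f) : ∃ g : pathGraph 3 →g H, Function.LeftInverse f g := by
  obtain ⟨b, hb⟩ := hsurj 0
  obtain ⟨c, hc⟩ := hsurj 2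
  obtain ⟨u, v, w, huv, hvw, hu, hv, hw⟩ := exists_adj_adj_of_walk f (hconn b c).some hc (Or.inl hb)
  refine ⟨pathGraphHomOfAdj ![u, v, w] (Fin.forall_fin_two.2 ⟨huv, hvw⟩), ?_⟩
  exact Fin.forall_fin_succ.2 ⟨hu, Fin.forall_fin_two.2 ⟨hv, hw⟩⟩

lemma exists_leftInverse_of_surjective_pathGraph {n : ℕ} (hn : n ≤ 2) (hconn : H.Connected)
    (f : H →g pathGraph (n + 1)) (hsurj : Function.Surjective f) :
    ∃ g : pathGraph (n + 1) →g H, Function.LeftInverse f g := by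
  interval_cases n
  · exact exists_leftInverse_of_pathGraph_one f hsurj
  · exact exists_leftInverse_of_pathGraph_two hconn f hsurj
  · exact exists_leftInverse_of_pathGraph_three hconn f hsurj

end SimpleGraph

/-- Fix `n ∈ {0,1,2}`. Let `H` be a connected simple graph and `f : H → Pₙ` a surjective
graph homomorphism, where `Pₙ = pathGraph (n+1)` is the path with `n` edges and `n+1`
vertices. Then `H` contains a connected (induced) subgraph `A` such that the restriction of
`f` to `A` is a graph isomorphism onto `Pₙ`, and there exists a graph homomorphism
`φ : H → A` with `f ∘ φ = f`; that is, `(H, f)` homomorphically maps onto `(A, f|A)` in the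
slice category `Gra/Pₙ`. -/
theorem stmt14 (n : ℕ) (hn : n ∈ ({0, 1, 2} : Set ℕ)) {V : Type*} (H : SimpleGraph V)
    (hconn : H.Connected) (f : H →g pathGraph (n + 1)) (hsurj : Function.Surjective f) :
    ∃ s : Set V, (H.induce s).Connected ∧
      (∃ e : H.induce s ≃g pathGraph (n + 1), ∀ x : s, e x = f (x : V)) ∧
      ∃ φ : H →g H.induce s, ∀ x : V, f ((φ x : s) : V) = f x := by
  have hn2 : n ≤ 2 := by rcases hn with rfl | rfl | rfl <;> norm_num
  obtain ⟨g, hfg⟩ := exists_leftInverse_of_surjective_pathGraph hn2 hconn f hsurj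
  let e := isoInduceRangeOfLeftInverse hfg
  exact ⟨Set.range g, e.connected_iff.mpr (pathGraph_connected n), ⟨e, fun _ => rfl⟩,
    retractionToRange f g, fun x => hfg (f x)⟩
end

section
/- Let H be a connected simple graph and f : H → P_3 a surjective graph homomorphism, where P_3 has vertices {0,1,2,3} with edges 0–1, 1–2, 2–3. Let P = u_0, u_1, …, u_k be a path in H of shortest length with f(u_0) = 0 and f(u_k) = 3. Then k is odd with k ≥ 3, and f(u_0) = 0, f(u_k) = 3, f(u_i) = 1 for odd i with 0 < i < k, and f(u_i) = 2 for even i with 0 < i < k; moreover there exists a graph homomorphism φ : H → H such that f ∘ φ = f, the image of φ is contained in {u_0, …, u_k}, and φ(u_i) = u_i for all 0 ≤ i ≤ k (i.e., (H,f) retracts onto the path P in the slice category Gra/P_3). -/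
open SimpleGraph

private lemma getVert_injOn' {V : Type*} {G : SimpleGraph V} {a b : V} (p : G.Walk a b)
    (hp : p.IsPath) : Set.InjOn p.getVert (Set.Iic p.length) := by
  induction p with
  | nil =>
    intro i hi j hj _
    simp only [Set.mem_Iic, Walk.length_nil, Nat.le_zero] at hi hj
    omega
  | cons h q ih =>
    rw [Walk.cons_isPath_iff] at hp
    intro i hi j hj hij
    simp only [Set.mem_Iic, Walk.length_cons] at hi hj
    match i, j with
    | 0, 0 => rfl
    | 0, (s+1) =>
      exfalso
      exact hp.2 (Walk.mem_support_iff_exists_getVert.mpr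
        ⟨s, by simpa [Walk.getVert_cons_succ] using hij.symm, by omega⟩)
    | (s+1), 0 =>
      exfalso
      exact hp.2 (Walk.mem_support_iff_exists_getVert.mpr
        ⟨s, by simpa [Walk.getVert_cons_succ] using hij, by omega⟩)
    | (s+1), (t+1) =>
      have := ih hp.1 (Set.mem_Iic.mpr (by omega : s ≤ q.length))
        (Set.mem_Iic.mpr (by omega : t ≤ q.length))
        (by simpa [Walk.getVert_cons_succ] using hij)
      omega

/-- Let `H` be a connected simple graph and `f : H → P₃` a surjective graph homomorphism,
where `P₃ = pathGraph 4` has vertices `{0,1,2,3}` and edges `0–1, 1–2, 2–3`. Let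
`u 0, u 1, …, u k` be a path in `H` (distinct vertices, consecutive ones adjacent) of
shortest length among paths with `f`-value `0` at the start and `3` at the end. Then `k` is
odd with `k ≥ 3`; `f (u i) = 1` for odd `i` with `0 < i < k` and `f (u i) = 2` for even `i`
with `0 < i < k`; and there is a graph homomorphism `φ : H → H` with `f ∘ φ = f`, whose
image is contained in `{u 0, …, u k}`, and with `φ (u i) = u i` for all `0 ≤ i ≤ k`; i.e.
`(H, f)` retracts onto the path in the slice category `Gra/P₃`. -/
theorem stmt15 {V : Type*} (H : SimpleGraph V) (hconn : H.Connected)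
    (f : H →g pathGraph 4) (hsurj : Function.Surjective f)
    (k : ℕ) (u : ℕ → V) (hinj : Set.InjOn u (Set.Iic k))
    (hadj : ∀ i < k, H.Adj (u i) (u (i + 1)))
    (h0 : f (u 0) = 0) (hk : f (u k) = 3)
    (hmin : ∀ (k' : ℕ) (w : ℕ → V), Set.InjOn w (Set.Iic k') →
      (∀ i < k', H.Adj (w i) (w (i + 1))) → f (w 0) = 0 → f (w k') = 3 → k ≤ k') :
    Odd k ∧ 3 ≤ k ∧
    (∀ i, 0 < i → i < k → (Odd i → f (u i) = 1) ∧ (Even i → f (u i) = 2)) ∧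
    ∃ φ : H →g H, (∀ x, f (φ x) = f x) ∧ (∀ x, ∃ i ≤ k, φ x = u i) ∧
      (∀ i ≤ k, φ (u i) = u i) := by
  classical
  have fadj : ∀ {x y : V}, H.Adj x y →
      (f x).val + 1 = (f y).val ∨ (f y).val + 1 = (f x).val :=
    fun h => pathGraph_adj.mp (f.map_adj h)
  have h0v : (f (u 0)).val = 0 := by rw [h0]; rfl
  have hkv : (f (u k)).val = 3 := by rw [hk]; rfl
  -- values along u
  have hval : ∀ i ≤ k, (f (u i)).val ≤ i ∧ (f (u i)).val % 2 = i % 2 := by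
    intro i hi
    induction i with
    | zero => omega
    | succ n ih =>
      have hn := ih (by omega)
      have := fadj (hadj n (by omega))
      omega
  have hoddk : Odd k := by
    have := hval k le_rfl
    rw [Nat.odd_iff]
    omega
  have h3k : 3 ≤ k := by have := hval k le_rfl; omega
  -- middle values
  have hmid : ∀ i, 0 < i → i < k → (f (u i)).val = 1 ∨ (f (u i)).val = 2 := by
    intro i h1 h2
    have hne0 : f (u i) ≠ 0 := by
      intro h
      have hm := hmin (k - i) (fun j => u (i + j))
        (fun a ha b hb hab => by
          simp only [Set.mem_Iic] at ha hb
          have : i + a = i + b :=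
            hinj (Set.mem_Iic.mpr (by omega)) (Set.mem_Iic.mpr (by omega)) hab
          omega)
        (fun j hj => hadj (i + j) (by omega))
        (by simpa using h)
        (by have h' : i + (k - i) = k := by omega
            simp only [h']; exact hk)
      omega
    have hne3 : f (u i) ≠ 3 := by
      intro h
      have hm := hmin i u
        (fun a ha b hb hab =>
          hinj (Set.mem_Iic.mpr (by simp only [Set.mem_Iic] at ha; omega))
            (Set.mem_Iic.mpr (by simp only [Set.mem_Iic] at hb; omega)) hab)
        (fun j hj => hadj j (by omega)) h0 h
      omega
    have hne0' : (f (u i)).val ≠ 0 := fun h => hne0 (Fin.ext_iff.mpr (by simpa using h))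
    have hne3' : (f (u i)).val ≠ 3 := fun h => hne3 (Fin.ext_iff.mpr (by simpa using h))
    have := (f (u i)).is_lt
    omega
  have hpart3 : ∀ i, 0 < i → i < k →
      (Odd i → f (u i) = 1) ∧ (Even i → f (u i) = 2) := by
    intro i h1 h2
    have hm := hmid i h1 h2
    have hp := hval i (by omega)
    constructor
    · intro hodd
      rw [Nat.odd_iff] at hodd
      exact Fin.ext_iff.mpr (by simp only [Fin.val_one]; omega)
    · intro heven
      rw [Nat.even_iff] at heven
      exact Fin.ext_iff.mpr (by simp only [Fin.val_two]; omega)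
  -- walks along u
  have uwalk : ∀ b a, a ≤ b → b ≤ k → ∃ p : H.Walk (u a) (u b), p.length = b - a := by
    intro b
    induction b with
    | zero =>
      intro a ha _
      have : a = 0 := by omega
      subst this
      exact ⟨Walk.nil, rfl⟩
    | succ n ih =>
      intro a ha hnk
      rcases Nat.lt_or_ge a (n + 1) with h | h
      · obtain ⟨p, hp⟩ := ih a (by omega) (by omega)
        exact ⟨p.concat (hadj n (by omega)), by rw [Walk.length_concat]; omega⟩
      · have : a = n + 1 := by omega
        subst this
        exact ⟨Walk.nil, by simp⟩
  -- parity along walks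
  have wlk_par : ∀ {x y : V} (p : H.Walk x y),
      ((f x).val + p.length) % 2 = (f y).val % 2 := by
    intro x y p
    induction p with
    | nil => simp
    | @cons a c y h q ih =>
      have := fadj h
      simp only [Walk.length_cons] at *
      omega
  -- minimality for arbitrary walks
  have wmin : ∀ {x y : V} (p : H.Walk x y), f x = 0 → f y = 3 → k ≤ p.length := by
    intro x y p hx hy
    refine le_trans (hmin p.bypass.length p.bypass.getVert
      (getVert_injOn' _ p.bypass_isPath)
      (fun i hi => p.bypass.adj_getVert_succ hi)
      (by rw [Walk.getVert_zero]; exact hx)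
      (by rw [Walk.getVert_length]; exact hy)) p.length_bypass_le
  -- distance to f⁻¹(0)
  obtain ⟨z0, hz0⟩ := hsurj 0
  set A : V → Set ℕ := fun x => {n | ∃ z, f z = 0 ∧ ∃ p : H.Walk z x, p.length = n}
    with hA
  have hAne : ∀ x, (A x).Nonempty := by
    intro x
    obtain ⟨p⟩ := hconn.preconnected z0 x
    exact ⟨p.length, z0, hz0, p, rfl⟩
  set α : V → ℕ := fun x => sInf (A x) with hαdef
  have hmem : ∀ x, α x ∈ A x := fun x => Nat.sInf_mem (hAne x)
  have hle' : ∀ x, ∀ n ∈ A x, α x ≤ n := fun x n hn => Nat.sInf_le hn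
  have hα_par : ∀ x, α x % 2 = (f x).val % 2 := by
    intro x
    obtain ⟨z, hz, p, hp⟩ := hmem x
    have hw := wlk_par p
    rw [hz] at hw
    simp only [Fin.val_zero, zero_add] at hw
    omega
  have hα_zero : ∀ x, α x = 0 → f x = 0 := by
    intro x h
    obtain ⟨z, hz, p, hp⟩ := hmem x
    rw [h] at hp
    have := Walk.eq_of_length_eq_zero hp
    subst this
    exact hz
  have hα_eq0 : ∀ x, f x = 0 → α x = 0 :=
    fun x hx => Nat.le_zero.mp (hle' x 0 ⟨x, hx, Walk.nil, rfl⟩)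
  have hα_step : ∀ {x y : V}, H.Adj x y → α y ≤ α x + 1 := by
    intro x y hxy
    obtain ⟨z, hz, p, hp⟩ := hmem x
    exact hle' y _ ⟨z, hz, p.concat hxy, by rw [Walk.length_concat]; omega⟩
  have hα3 : ∀ x, f x = 3 → k ≤ α x := by
    intro x hx
    obtain ⟨z, hz, p, hp⟩ := hmem x
    have := wmin p hz hx
    omega
  have hα_ui : ∀ i ≤ k, α (u i) = i := by
    intro i hi
    have hle : α (u i) ≤ i := by
      obtain ⟨p, hp⟩ := uwalk i 0 (Nat.zero_le _) hi
      exact le_trans (hle' _ _ ⟨u 0, h0, p, rfl⟩) (by omega)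
    have hge : i ≤ α (u i) := by
      obtain ⟨z, hz, p, hp⟩ := hmem (u i)
      obtain ⟨q, hq⟩ := uwalk k i hi le_rfl
      have := wmin (p.append q) hz hk
      rw [Walk.length_append] at this
      omega
    omega
  -- the retraction index
  set ι : V → ℕ := fun x => min (α x) (k - 3 + (f x).val) with hιdef
  have hι_le : ∀ x, ι x ≤ k := by
    intro x
    have := (f x).is_lt
    simp only [hιdef]
    omega
  have hι_par : ∀ x, ι x % 2 = (f x).val % 2 := by
    intro x
    have h1 := hα_par x
    have h2 := Nat.odd_iff.mp hoddk
    simp only [hιdef]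
    omega
  have hι_ui : ∀ i ≤ k, ι (u i) = i := by
    intro i hi
    have hα := hα_ui i hi
    have hv := hval i hi
    have h4 := (f (u i)).is_lt
    rcases Nat.eq_zero_or_pos i with h | h
    · subst h; simp only [hιdef]; omega
    rcases Nat.lt_or_ge i k with h' | h'
    · have := hmid i h h'
      have hk2 := Nat.odd_iff.mp hoddk
      simp only [hιdef]
      omega
    · have : i = k := by omega
      subst this
      simp only [hιdef]
      omega
  have hι_f : ∀ x, f (u (ι x)) = f x := by
    intro x
    have h4 := (f x).is_lt
    have hpar := hι_par x
    have hαpar := hα_par x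
    have hk2 := Nat.odd_iff.mp hoddk
    interval_cases hfx : (f x).val
    · have hx0 : f x = 0 := Fin.ext_iff.mpr (by simpa using hfx)
      have : ι x = 0 := by
        have := hα_eq0 x hx0
        simp only [hιdef]
        omega
      rw [this, h0, hx0]
    · have hx1 : f x = 1 := Fin.ext_iff.mpr (by simpa using hfx)
      have hb : 0 < ι x ∧ ι x < k := by
        simp only [hιdef] at hpar ⊢
        omega
      have := (hpart3 (ι x) hb.1 hb.2).1 (Nat.odd_iff.mpr (by omega))
      rw [this, hx1]
    · have hx2 : f x = 2 := Fin.ext_iff.mpr (by simpa using hfx)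
      have hαne : α x ≠ 0 := by
        intro h
        have := hα_zero x h
        rw [hx2] at this
        exact absurd (congrArg Fin.val this) (by decide)
      have hb : 0 < ι x ∧ ι x < k := by
        simp only [hιdef] at hpar ⊢
        omega
      have := (hpart3 (ι x) hb.1 hb.2).2 (Nat.even_iff.mpr (by omega))
      rw [this, hx2]
    · have hx3 : f x = 3 := Fin.ext_iff.mpr (by simpa using hfx)
      have : ι x = k := by
        have := hα3 x hx3
        simp only [hιdef]
        omega
      rw [this, hk, hx3]
  have hι_adj : ∀ {x y : V}, H.Adj x y → H.Adj (u (ι x)) (u (ι y)) := by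
    intro x y hxy
    have h1 := hα_step hxy
    have h2 := hα_step hxy.symm
    have h3 := fadj hxy
    have hp1 := hι_par x
    have hp2 := hι_par y
    have hlx := hι_le x
    have hly := hι_le y
    have hstep : ι y = ι x + 1 ∨ ι x = ι y + 1 := by
      simp only [hιdef] at *
      omega
    rcases hstep with h | h
    · rw [h]; exact hadj (ι x) (by omega)
    · rw [h]; exact (hadj (ι y) (by omega)).symm
  refine ⟨hoddk, h3k, hpart3,
    ⟨⟨fun x => u (ι x), fun h => hι_adj h⟩, fun x => hι_f x,
      fun x => ⟨ι x, hι_le x, rfl⟩, fun i hi => ?_⟩⟩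
  show u (ι (u i)) = u i
  rw [hι_ui i hi]
end
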